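/- arXiv:1707.08603 — 9 statements merged into one kernel-verified Lean document; each statement's English description precedes it below -/
import Mathlib

section
/- Let n ≥ 1, let A be an n×n complex matrix, and let L > 0. Let γ : ℝ → ℂ be a closed curve, differentiable on [0,L] with derivative γ', such that γ(s) is not in the spectrum of A for all s ∈ [0,L] and s ↦ (γ(s)•1 − A)⁻¹ is continuous on [0,L]. For s ∈ [0,L] set R(s) := (γ(s)•1 − A)⁻¹ and μ(s) := (γ'(s)/(2πi))•R(s) + ((γ'(s)/(2πi))•R(s))ᴴ, and let λmin(s) denote the smallest eigenvalue of the Hermitian matrix μ(s), i.e. the infimum of Re⟪μ(s)x, x⟫ over unit vectors x in EuclideanSpace ℂ (Fin n). Assume that ∫₀ᴸ μ(s) ds = 2•1 (twice the identity matrix). Let f : ℂ → ℂ be continuous on the image γ([0,L]) with |f(γ(s))| ≤ 1 for all s ∈ [0,L]. Define fA := ∫₀ᴸ (γ'(s)/(2πi))·f(γ(s)) • R(s) ds, gA := ∫₀ᴸ (γ'(s)/(2πi))·conj(f(γ(s))) • R(s) ds, the scalar γ₀ := −∫₀ᴸ λmin(s)·f(γ(s)) ds, and δ := −∫₀ᴸ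 λmin(s) ds. Then the matrix S := fA + gAᴴ + γ₀•1 satisfies ‖S‖ ≤ 2 + δ, where ‖·‖ is the ℓ² operator norm. -/
open Matrix MeasureTheory Complex
open scoped Real ComplexOrder

attribute [local instance] Matrix.normedAddCommGroup Matrix.normedSpace

noncomputable def l2opNorm {n : ℕ} (M : Matrix (Fin n) (Fin n) ℂ) : ℝ :=
  ‖(Matrix.toEuclideanCLM (𝕜 := ℂ) M : EuclideanSpace ℂ (Fin n) →L[ℂ] EuclideanSpace ℂ (Fin n))‖

/-- The smallest eigenvalue of a Hermitian matrix, as the infimum of `Re⟪Hx, x⟫`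
over unit vectors `x`. -/
noncomputable def lambdaMin {n : ℕ} (H : Matrix (Fin n) (Fin n) ℂ) : ℝ :=
  sInf {r : ℝ | ∃ x : EuclideanSpace ℂ (Fin n), ‖x‖ = 1 ∧
    r = (inner ℂ ((Matrix.toEuclideanCLM (𝕜 := ℂ) H) x) x : ℂ).re}

lemma lambdaMin_le {n : ℕ} (H : Matrix (Fin n) (Fin n) ℂ) (u : EuclideanSpace ℂ (Fin n))
    (hu : ‖u‖ = 1) :
    lambdaMin H ≤ (inner ℂ ((Matrix.toEuclideanCLM (𝕜 := ℂ) H) u) u : ℂ).re := by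
  apply csInf_le
  · refine ⟨-‖Matrix.toEuclideanCLM (𝕜 := ℂ) H‖, ?_⟩
    rintro r ⟨x, hx, rfl⟩
    have h1 : ‖(inner ℂ ((Matrix.toEuclideanCLM (𝕜 := ℂ) H) x) x : ℂ)‖ ≤
        ‖Matrix.toEuclideanCLM (𝕜 := ℂ) H‖ := by
      calc ‖(inner ℂ ((Matrix.toEuclideanCLM (𝕜 := ℂ) H) x) x : ℂ)‖
          ≤ ‖(Matrix.toEuclideanCLM (𝕜 := ℂ) H) x‖ * ‖x‖ := norm_inner_le_norm _ _
        _ ≤ ‖Matrix.toEuclideanCLM (𝕜 := ℂ) H‖ * ‖x‖ * ‖x‖ := by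
            gcongr; exact (Matrix.toEuclideanCLM (𝕜 := ℂ) H).le_opNorm x
        _ = ‖Matrix.toEuclideanCLM (𝕜 := ℂ) H‖ := by rw [hx]; ring
    have := (abs_le.mp ((Complex.abs_re_le_norm _).trans h1)).1
    linarith
  · exact ⟨u, hu, rfl⟩

lemma lambdaMin_mul_le {n : ℕ} (H : Matrix (Fin n) (Fin n) ℂ) (x : EuclideanSpace ℂ (Fin n)) :
    lambdaMin H * ‖x‖ ^ 2 ≤ (inner ℂ ((Matrix.toEuclideanCLM (𝕜 := ℂ) H) x) x : ℂ).re := by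
  rcases eq_or_ne x 0 with rfl | hx
  · simp
  · have hnx : ‖x‖ ≠ 0 := norm_ne_zero_iff.mpr hx
    set u : EuclideanSpace ℂ (Fin n) := (‖x‖⁻¹ : ℂ) • x with hu
    have hun : ‖u‖ = 1 := by
      rw [hu, norm_smul]
      simp [norm_inv, hnx]
    have key := lambdaMin_le H u hun
    have hexp : (inner ℂ ((Matrix.toEuclideanCLM (𝕜 := ℂ) H) u) u : ℂ) =
        ((‖x‖ : ℂ)⁻¹ * (starRingEnd ℂ) (‖x‖ : ℂ)⁻¹) *
          inner ℂ ((Matrix.toEuclideanCLM (𝕜 := ℂ) H) x) x := by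
      rw [hu, ContinuousLinearMap.map_smul, inner_smul_left, inner_smul_right]
      push_cast
      ring
    rw [hexp] at key
    have : ((‖x‖ : ℂ)⁻¹ * (starRingEnd ℂ) (‖x‖ : ℂ)⁻¹) = ((‖x‖ ^ 2)⁻¹ : ℝ) := by
      rw [← Complex.ofReal_inv, Complex.conj_ofReal]
      push_cast
      ring
    rw [this, Complex.re_ofReal_mul] at key
    have h2 : (0:ℝ) < ‖x‖ ^ 2 := by positivity
    calc lambdaMin H * ‖x‖ ^ 2 ≤ ((‖x‖ ^ 2)⁻¹ * (inner ℂ ((Matrix.toEuclideanCLM (𝕜 := ℂ) H) x) x : ℂ).re) * ‖x‖ ^ 2 := by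
          gcongr
      _ = (inner ℂ ((Matrix.toEuclideanCLM (𝕜 := ℂ) H) x) x : ℂ).re := by
          field_simp

lemma posSemidef_of_re_inner {n : ℕ} (P : Matrix (Fin n) (Fin n) ℂ) (hH : Pᴴ = P)
    (hq : ∀ x : EuclideanSpace ℂ (Fin n),
      0 ≤ (inner ℂ ((Matrix.toEuclideanCLM (𝕜 := ℂ) P) x) x : ℂ).re) :
    P.PosSemidef := by
  refine Matrix.PosSemidef.of_dotProduct_mulVec_nonneg hH fun v => ?_
  have hself : star (star v ⬝ᵥ (P *ᵥ v)) = star v ⬝ᵥ (P *ᵥ v) := by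
    conv_lhs => rw [← Matrix.star_dotProduct]
    rw [Matrix.star_mulVec, hH, ← Matrix.dotProduct_mulVec]
  have him : (star v ⬝ᵥ (P *ᵥ v)).im = 0 := by
    have h2 := congrArg Complex.im hself
    rw [Complex.star_def, Complex.conj_im] at h2
    linarith
  have hre : 0 ≤ (star v ⬝ᵥ (P *ᵥ v)).re := by
    have h := hq ((WithLp.equiv 2 (Fin n → ℂ)).symm v)
    have hb : (inner ℂ ((Matrix.toEuclideanCLM (𝕜 := ℂ) P) ((WithLp.equiv 2 (Fin n → ℂ)).symm v))
        ((WithLp.equiv 2 (Fin n → ℂ)).symm v) : ℂ) = star (P *ᵥ v) ⬝ᵥ v := by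
      rw [EuclideanSpace.inner_eq_star_dotProduct, dotProduct_comm]; rfl
    rw [hb] at h
    have : star (P *ᵥ v) ⬝ᵥ v = star (star v ⬝ᵥ (P *ᵥ v)) := by
      rw [Matrix.star_dotProduct]
    rw [this] at h
    simpa using h
  rw [RCLike.nonneg_iff]
  exact ⟨hre, him⟩

open scoped MatrixOrder in
lemma psd_inner_le {n : ℕ} {P : Matrix (Fin n) (Fin n) ℂ} (hP : P.PosSemidef)
    (x y : EuclideanSpace ℂ (Fin n)) :
    ‖(inner (𝕜 := ℂ) y ((Matrix.toEuclideanCLM (𝕜 := ℂ) P) x) : ℂ)‖ ≤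
      ((inner ℂ ((Matrix.toEuclideanCLM (𝕜 := ℂ) P) x) x : ℂ).re
        + (inner ℂ ((Matrix.toEuclideanCLM (𝕜 := ℂ) P) y) y : ℂ).re) / 2 := by
  set Q := CFC.sqrt P with hQ
  have hQQ : Q * Q = P := CFC.sqrt_mul_sqrt_self P hP.nonneg
  have hQherm : Qᴴ = Q := (CFC.sqrt_nonneg P).posSemidef.1
  set T := Matrix.toEuclideanCLM (𝕜 := ℂ) Q with hT
  have hTsa : ContinuousLinearMap.adjoint T = T := by
    rw [hT, ← ContinuousLinearMap.star_eq_adjoint, ← map_star]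
    rw [Matrix.star_eq_conjTranspose, hQherm]
  have hPT : Matrix.toEuclideanCLM (𝕜 := ℂ) P = T * T := by rw [← hQQ, _root_.map_mul]
  have key : ∀ z : EuclideanSpace ℂ (Fin n),
      (inner ℂ ((Matrix.toEuclideanCLM (𝕜 := ℂ) P) z) z : ℂ).re = ‖T z‖ ^ 2 := by
    intro z
    rw [hPT]
    have : (T * T) z = T (T z) := rfl
    rw [this, ← ContinuousLinearMap.adjoint_inner_right T (T z) z, hTsa,
      inner_self_eq_norm_sq_to_K]
    norm_cast
  have hxy : (inner (𝕜 := ℂ) y ((Matrix.toEuclideanCLM (𝕜 := ℂ) P) x) : ℂ) =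
      inner (𝕜 := ℂ) (T y) (T x) := by
    rw [hPT]
    have : (T * T) x = T (T x) := rfl
    rw [this, ← ContinuousLinearMap.adjoint_inner_left T (T x) y, hTsa]
  rw [hxy, key, key]
  calc ‖(inner (𝕜 := ℂ) (T y) (T x) : ℂ)‖ ≤ ‖T y‖ * ‖T x‖ := norm_inner_le_norm _ _
    _ ≤ (‖T x‖ ^ 2 + ‖T y‖ ^ 2) / 2 := by nlinarith [sq_nonneg (‖T x‖ - ‖T y‖)]

lemma re_inner_comm {n : ℕ} (a b : EuclideanSpace ℂ (Fin n)) :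
    (inner (𝕜 := ℂ) a b : ℂ).re = (inner (𝕜 := ℂ) b a : ℂ).re := by
  rw [← inner_conj_symm]
  exact Complex.conj_re _

noncomputable instance matENormedAddMonoid {n : ℕ} : ENormedAddMonoid (Matrix (Fin n) (Fin n) ℂ) :=
  inferInstanceAs (ENormedAddMonoid (Fin n → Fin n → ℂ))

set_option maxHeartbeats 1000000 in
theorem crouzeix_palencia_lemma1
    {n : ℕ} (hn : 1 ≤ n) (A : Matrix (Fin n) (Fin n) ℂ) (L : ℝ) (hL : 0 < L)
    (γ γ' : ℝ → ℂ)
    (hclosed : γ L = γ 0)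
    (hderiv : ∀ s ∈ Set.Icc (0 : ℝ) L, HasDerivAt γ (γ' s) s)
    (hγ'cont : ContinuousOn γ' (Set.Icc (0 : ℝ) L))
    (hspec : ∀ s ∈ Set.Icc (0 : ℝ) L, γ s ∉ spectrum ℂ A)
    (R : ℝ → Matrix (Fin n) (Fin n) ℂ)
    (hRdef : ∀ s, R s = (γ s • (1 : Matrix (Fin n) (Fin n) ℂ) - A)⁻¹)
    (hRcont : ContinuousOn R (Set.Icc (0 : ℝ) L))
    (μ : ℝ → Matrix (Fin n) (Fin n) ℂ)
    (hμdef : ∀ s, μ s = (γ' s / (2 * (π : ℂ) * I)) • R s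
        + ((γ' s / (2 * (π : ℂ) * I)) • R s)ᴴ)
    (hμint : ∫ s in (0 : ℝ)..L, μ s = (2 : ℂ) • (1 : Matrix (Fin n) (Fin n) ℂ))
    (hlmin_int : IntervalIntegrable (fun s => lambdaMin (μ s)) volume 0 L)
    (f : ℂ → ℂ)
    (hfcont : ContinuousOn f (γ '' Set.Icc (0 : ℝ) L))
    (hfbound : ∀ s ∈ Set.Icc (0 : ℝ) L, ‖f (γ s)‖ ≤ 1)
    (fA gA : Matrix (Fin n) (Fin n) ℂ)
    (hfA : fA = ∫ s in (0 : ℝ)..L, (γ' s / (2 * (π : ℂ) * I) * f (γ s)) • R s)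
    (hgA : gA = ∫ s in (0 : ℝ)..L,
        (γ' s / (2 * (π : ℂ) * I) * (starRingEnd ℂ) (f (γ s))) • R s)
    (γ₀ : ℂ)
    (hγ₀ : γ₀ = - ∫ s in (0 : ℝ)..L, (lambdaMin (μ s) : ℂ) * f (γ s))
    (δ : ℝ)
    (hδ : δ = - ∫ s in (0 : ℝ)..L, lambdaMin (μ s)) :
    l2opNorm (fA + gAᴴ + γ₀ • (1 : Matrix (Fin n) (Fin n) ℂ)) ≤ 2 + δ := by
  have h0L : (0:ℝ) ≤ L := hL.le
  have huIcc : Set.uIcc (0:ℝ) L = Set.Icc 0 L := Set.uIcc_of_le h0L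
  set c : ℝ → ℂ := fun s => γ' s / (2 * (π : ℂ) * I) with hc
  set l : ℝ → ℝ := fun s => lambdaMin (μ s) with hldef
  set Pm : ℝ → Matrix (Fin n) (Fin n) ℂ := fun s => μ s - ((l s : ℝ) : ℂ) • 1 with hPmdef
  -- continuity facts
  have hγcont : ContinuousOn γ (Set.Icc 0 L) :=
    fun s hs => ((hderiv s hs).continuousAt).continuousWithinAt
  have hfγcont : ContinuousOn (fun s => f (γ s)) (Set.Icc 0 L) :=
    hfcont.comp hγcont (Set.mapsTo_image γ _)
  have hcc : ContinuousOn c (Set.Icc 0 L) := hγ'cont.div_const _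
  have hconjT : Continuous (fun M : Matrix (Fin n) (Fin n) ℂ => Mᴴ) :=
    continuous_id.matrix_conjTranspose
  have hcRcont : ContinuousOn (fun s => c s • R s) (Set.Icc 0 L) := hcc.smul hRcont
  have hμcont : ContinuousOn μ (Set.Icc 0 L) := by
    have : ContinuousOn (fun s => c s • R s + (c s • R s)ᴴ) (Set.Icc 0 L) :=
      hcRcont.add (hconjT.comp_continuousOn hcRcont)
    exact fun s hs => by rw [show μ = fun s => c s • R s + (c s • R s)ᴴ from funext hμdef]; exact this s hs
  -- integrability facts
  have hμII : IntervalIntegrable μ volume 0 L :=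
    ContinuousOn.intervalIntegrable (by rw [huIcc]; exact hμcont)
  have hfμII : IntervalIntegrable (fun s => f (γ s) • μ s) volume 0 L :=
    ContinuousOn.intervalIntegrable (by rw [huIcc]; exact hfγcont.smul hμcont)
  have hlC : IntervalIntegrable (fun s => ((l s : ℝ) : ℂ)) volume 0 L := by
    have h1 : (fun s => ((l s : ℝ) : ℂ)) = fun s => l s • (1:ℂ) := by
      funext s
      simp [Complex.real_smul]
    rw [h1]
    exact ⟨hlmin_int.1.smul_const (1:ℂ), hlmin_int.2.smul_const (1:ℂ)⟩
  have hlfII : IntervalIntegrable (fun s => ((l s : ℝ) : ℂ) * f (γ s)) volume 0 L :=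
    hlC.mul_continuousOn (by rw [huIcc]; exact hfγcont)
  have hlf1II : IntervalIntegrable
      (fun s => (((l s : ℝ) : ℂ) * f (γ s)) • (1 : Matrix (Fin n) (Fin n) ℂ)) volume 0 L :=
    ⟨hlfII.1.smul_const _, hlfII.2.smul_const _⟩
  have hl1II : IntervalIntegrable
      (fun s => ((l s : ℝ) : ℂ) • (1 : Matrix (Fin n) (Fin n) ℂ)) volume 0 L :=
    ⟨hlC.1.smul_const _, hlC.2.smul_const _⟩
  have hPII : IntervalIntegrable Pm volume 0 L := hμII.sub hl1II
  have hfPII : IntervalIntegrable (fun s => f (γ s) • Pm s) volume 0 L := by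
    have heq : (fun s => f (γ s) • Pm s)
        = fun s => f (γ s) • μ s - (((l s : ℝ) : ℂ) * f (γ s)) • (1 : Matrix (Fin n) (Fin n) ℂ) := by
      funext s
      rw [hPmdef]
      rw [smul_sub, smul_smul, mul_comm]
    rw [heq]
    exact hfμII.sub hlf1II
  -- conjTranspose as a real CLM
  let CT : Matrix (Fin n) (Fin n) ℂ →L[ℝ] Matrix (Fin n) (Fin n) ℂ :=
    LinearMap.toContinuousLinearMap
      { toFun := fun M => Mᴴ
        map_add' := fun M N => Matrix.conjTranspose_add M N
        map_smul' := fun r M => by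
          ext i j
          simp [Matrix.conjTranspose_apply] }
  have hCT : ∀ (g : ℝ → Matrix (Fin n) (Fin n) ℂ), IntervalIntegrable g volume 0 L →
      (∫ s in (0:ℝ)..L, g s)ᴴ = ∫ s in (0:ℝ)..L, (g s)ᴴ := by
    intro g hg
    have := CT.intervalIntegral_comp_comm hg
    exact this.symm
  -- scalar • 1 as a CLM
  let SO : ℂ →L[ℂ] Matrix (Fin n) (Fin n) ℂ :=
    (ContinuousLinearMap.id ℂ ℂ).smulRight (1 : Matrix (Fin n) (Fin n) ℂ)
  have hSO : ∀ (g : ℝ → ℂ), IntervalIntegrable g volume 0 L →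
      (∫ s in (0:ℝ)..L, g s) • (1 : Matrix (Fin n) (Fin n) ℂ)
        = ∫ s in (0:ℝ)..L, g s • (1 : Matrix (Fin n) (Fin n) ℂ) := by
    intro g hg
    have := SO.intervalIntegral_comp_comm hg
    simpa [SO] using this.symm
  -- inner products against toEuclideanCLM as CLMs
  let Φ : EuclideanSpace ℂ (Fin n) → EuclideanSpace ℂ (Fin n) →
      (Matrix (Fin n) (Fin n) ℂ →L[ℂ] ℂ) := fun x y =>
    LinearMap.toContinuousLinearMap
      { toFun := fun M => (inner (𝕜 := ℂ) y ((Matrix.toEuclideanCLM (𝕜 := ℂ) M) x) : ℂ)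
        map_add' := fun M N => by
          show (inner (𝕜 := ℂ) y ((Matrix.toEuclideanCLM (𝕜 := ℂ) (M + N)) x) : ℂ) = _
          rw [map_add, ContinuousLinearMap.add_apply, inner_add_right]
        map_smul' := fun a M => by
          show (inner (𝕜 := ℂ) y ((Matrix.toEuclideanCLM (𝕜 := ℂ) (a • M)) x) : ℂ) = _
          rw [_root_.map_smul, ContinuousLinearMap.smul_apply, inner_smul_right]
          rfl }
  have hΦapp : ∀ x y M, Φ x y M = (inner (𝕜 := ℂ) y ((Matrix.toEuclideanCLM (𝕜 := ℂ) M) x) : ℂ) :=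
    fun x y M => rfl
  have hΦint : ∀ (x y : EuclideanSpace ℂ (Fin n)) (g : ℝ → Matrix (Fin n) (Fin n) ℂ),
      IntervalIntegrable g volume 0 L →
      IntervalIntegrable (fun s => (inner (𝕜 := ℂ) y ((Matrix.toEuclideanCLM (𝕜 := ℂ) (g s)) x) : ℂ)) volume 0 L := by
    intro x y g hg
    exact ⟨(Φ x y).integrable_comp hg.1, (Φ x y).integrable_comp hg.2⟩
  have hΦcomm : ∀ (x y : EuclideanSpace ℂ (Fin n)) (g : ℝ → Matrix (Fin n) (Fin n) ℂ),
      IntervalIntegrable g volume 0 L →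
      (inner (𝕜 := ℂ) y ((Matrix.toEuclideanCLM (𝕜 := ℂ) (∫ s in (0:ℝ)..L, g s)) x) : ℂ)
        = ∫ s in (0:ℝ)..L, (inner (𝕜 := ℂ) y ((Matrix.toEuclideanCLM (𝕜 := ℂ) (g s)) x) : ℂ) := by
    intro x y g hg
    exact ((Φ x y).intervalIntegral_comp_comm hg).symm
  -- the main algebraic identity
  have hgAH : gAᴴ = ∫ s in (0:ℝ)..L, ((c s * (starRingEnd ℂ) (f (γ s))) • R s)ᴴ := by
    rw [hgA]
    apply hCT
    apply ContinuousOn.intervalIntegrable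
    rw [huIcc]
    exact (hcc.mul (Complex.continuous_conj.comp_continuousOn hfγcont)).smul hRcont
  have hfAint : IntervalIntegrable (fun s => (c s * f (γ s)) • R s) volume 0 L :=
    ContinuousOn.intervalIntegrable (by rw [huIcc]; exact (hcc.mul hfγcont).smul hRcont)
  have hgAint : IntervalIntegrable (fun s => ((c s * (starRingEnd ℂ) (f (γ s))) • R s)ᴴ) volume 0 L :=
    ContinuousOn.intervalIntegrable (by
      rw [huIcc]
      exact hconjT.comp_continuousOn
        ((hcc.mul (Complex.continuous_conj.comp_continuousOn hfγcont)).smul hRcont))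
  have hsum : fA + gAᴴ = ∫ s in (0:ℝ)..L, f (γ s) • μ s := by
    rw [hfA, hgAH, ← intervalIntegral.integral_add hfAint hgAint]
    congr 1
    funext s
    rw [hμdef s]
    rw [Matrix.conjTranspose_smul, Matrix.conjTranspose_smul, smul_add, smul_smul, smul_smul]
    congr 1
    · congr 1; ring
    · congr 1
      simp only [star_mul', Complex.star_def, Complex.conj_conj]
      ring
  have hγ1 : γ₀ • (1 : Matrix (Fin n) (Fin n) ℂ)
      = - ∫ s in (0:ℝ)..L, (((l s : ℝ) : ℂ) * f (γ s)) • (1 : Matrix (Fin n) (Fin n) ℂ) := by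
    rw [hγ₀, neg_smul, hSO _ hlfII]
  have hS : fA + gAᴴ + γ₀ • (1 : Matrix (Fin n) (Fin n) ℂ) = ∫ s in (0:ℝ)..L, f (γ s) • Pm s := by
    rw [hsum, hγ1, ← sub_eq_add_neg, ← intervalIntegral.integral_sub hfμII hlf1II]
    congr 1
    funext s
    rw [hPmdef]
    rw [smul_sub, smul_smul, mul_comm]
  -- integral of Pm
  have hintl : (∫ s in (0:ℝ)..L, ((l s : ℝ) : ℂ)) = (((∫ s in (0:ℝ)..L, l s) : ℝ) : ℂ) :=
    RCLike.intervalIntegral_ofReal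
  have hPint_eq : (∫ s in (0:ℝ)..L, Pm s) = (((2 + δ : ℝ)) : ℂ) • (1 : Matrix (Fin n) (Fin n) ℂ) := by
    rw [show Pm = fun s => μ s - ((l s : ℝ) : ℂ) • (1 : Matrix (Fin n) (Fin n) ℂ) from rfl]
    rw [intervalIntegral.integral_sub hμII hl1II, hμint, ← hSO _ hlC, hintl, hδ]
    rw [← sub_smul]
    congr 1
    push_cast
    ring
  -- quadratic form identity
  have hreint : ∀ (x y : EuclideanSpace ℂ (Fin n)) (g : ℝ → Matrix (Fin n) (Fin n) ℂ),
      IntervalIntegrable g volume 0 L →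
      IntervalIntegrable (fun s => (inner (𝕜 := ℂ) y ((Matrix.toEuclideanCLM (𝕜 := ℂ) (g s)) x) : ℂ).re) volume 0 L := by
    intro x y g hg
    have h := hΦint x y g hg
    exact ⟨Complex.reCLM.integrable_comp h.1, Complex.reCLM.integrable_comp h.2⟩
  have quad : ∀ x : EuclideanSpace ℂ (Fin n), ‖x‖ = 1 →
      (∫ s in (0:ℝ)..L, (inner (𝕜 := ℂ) x ((Matrix.toEuclideanCLM (𝕜 := ℂ) (Pm s)) x) : ℂ).re) = 2 + δ := by
    intro x hx
    have h1 : (∫ s in (0:ℝ)..L, (inner (𝕜 := ℂ) x ((Matrix.toEuclideanCLM (𝕜 := ℂ) (Pm s)) x) : ℂ).re)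
        = (∫ s in (0:ℝ)..L, (inner (𝕜 := ℂ) x ((Matrix.toEuclideanCLM (𝕜 := ℂ) (Pm s)) x) : ℂ)).re := by
      have := Complex.reCLM.intervalIntegral_comp_comm (hΦint x x Pm hPII)
      simpa using this
    rw [h1, ← hΦcomm x x Pm hPII, hPint_eq, _root_.map_smul, _root_.map_one]
    rw [ContinuousLinearMap.smul_apply, ContinuousLinearMap.one_apply, inner_smul_right]
    rw [inner_self_eq_norm_sq_to_K, hx]
    simp
  -- positivity of Pm
  have hμherm : ∀ s, (μ s)ᴴ = μ s := by
    intro s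
    rw [hμdef s, Matrix.conjTranspose_add, Matrix.conjTranspose_conjTranspose, add_comm]
  have hPmpsd : ∀ s, (Pm s).PosSemidef := by
    intro s
    apply posSemidef_of_re_inner
    · rw [show Pm s = μ s - ((l s : ℝ) : ℂ) • 1 from rfl]
      rw [Matrix.conjTranspose_sub, hμherm, Matrix.conjTranspose_smul, Matrix.conjTranspose_one,
        Complex.star_def, Complex.conj_ofReal]
    · intro x
      have hkey := lambdaMin_mul_le (μ s) x
      have hexp : (inner ℂ ((Matrix.toEuclideanCLM (𝕜 := ℂ) (Pm s)) x) x : ℂ)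
          = inner ℂ ((Matrix.toEuclideanCLM (𝕜 := ℂ) (μ s)) x) x - (((l s * ‖x‖ ^ 2 : ℝ)) : ℂ) := by
        rw [show Pm s = μ s - ((l s : ℝ) : ℂ) • 1 from rfl, map_sub, _root_.map_smul, _root_.map_one]
        rw [ContinuousLinearMap.sub_apply, ContinuousLinearMap.smul_apply,
          ContinuousLinearMap.one_apply, inner_sub_left, inner_smul_left]
        rw [Complex.conj_ofReal, inner_self_eq_norm_sq_to_K, ← RCLike.ofReal_pow]
        rw [show (RCLike.ofReal (‖x‖ ^ 2) : ℂ) = ((‖x‖ ^ 2 : ℝ) : ℂ) from by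
          rw [← Complex.coe_algebraMap]]
        norm_cast
      rw [hexp, Complex.sub_re, Complex.ofReal_re]
      rw [hldef] at *
      linarith [hkey]
  -- 2 + δ is nonneg
  have hx₀ : ∃ x₀ : EuclideanSpace ℂ (Fin n), ‖x₀‖ = 1 := by
    refine ⟨EuclideanSpace.single (⟨0, hn⟩ : Fin n) (1 : ℂ), ?_⟩
    rw [EuclideanSpace.norm_single]
    simp
  obtain ⟨x₀, hx₀⟩ := hx₀
  have hptnn : ∀ (x : EuclideanSpace ℂ (Fin n)) s,
      0 ≤ (inner (𝕜 := ℂ) x ((Matrix.toEuclideanCLM (𝕜 := ℂ) (Pm s)) x) : ℂ).re := by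
    intro x s
    have hq : 0 ≤ (inner ℂ ((Matrix.toEuclideanCLM (𝕜 := ℂ) (Pm s)) x) x : ℂ).re := by
      have hkey := lambdaMin_mul_le (μ s) x
      have hexp : (inner ℂ ((Matrix.toEuclideanCLM (𝕜 := ℂ) (Pm s)) x) x : ℂ)
          = inner ℂ ((Matrix.toEuclideanCLM (𝕜 := ℂ) (μ s)) x) x - (((l s * ‖x‖ ^ 2 : ℝ)) : ℂ) := by
        rw [show Pm s = μ s - ((l s : ℝ) : ℂ) • 1 from rfl, map_sub, _root_.map_smul, _root_.map_one]
        rw [ContinuousLinearMap.sub_apply, ContinuousLinearMap.smul_apply,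
          ContinuousLinearMap.one_apply, inner_sub_left, inner_smul_left]
        rw [Complex.conj_ofReal, inner_self_eq_norm_sq_to_K, ← RCLike.ofReal_pow]
        rw [show (RCLike.ofReal (‖x‖ ^ 2) : ℂ) = ((‖x‖ ^ 2 : ℝ) : ℂ) from by
          rw [← Complex.coe_algebraMap]]
        norm_cast
      rw [hexp, Complex.sub_re, Complex.ofReal_re]
      rw [hldef] at *
      linarith [hkey]
    rwa [re_inner_comm]
  have h2δ : 0 ≤ 2 + δ := by
    rw [← quad x₀ hx₀]
    apply intervalIntegral.integral_nonneg h0L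
    intro s _
    exact hptnn x₀ s
  -- the key bound on inner products
  have key : ∀ x y : EuclideanSpace ℂ (Fin n), ‖x‖ = 1 → ‖y‖ = 1 →
      ‖(inner (𝕜 := ℂ) y ((Matrix.toEuclideanCLM (𝕜 := ℂ)
        (fA + gAᴴ + γ₀ • (1 : Matrix (Fin n) (Fin n) ℂ))) x) : ℂ)‖ ≤ 2 + δ := by
    intro x y hx hy
    rw [hS, hΦcomm x y _ hfPII]
    have hbd : ∀ s ∈ Set.Icc (0:ℝ) L,
        ‖(inner (𝕜 := ℂ) y ((Matrix.toEuclideanCLM (𝕜 := ℂ) (f (γ s) • Pm s)) x) : ℂ)‖ ≤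
          ((inner (𝕜 := ℂ) x ((Matrix.toEuclideanCLM (𝕜 := ℂ) (Pm s)) x) : ℂ).re
            + (inner (𝕜 := ℂ) y ((Matrix.toEuclideanCLM (𝕜 := ℂ) (Pm s)) y) : ℂ).re) / 2 := by
      intro s hs
      have h1 : (inner (𝕜 := ℂ) y ((Matrix.toEuclideanCLM (𝕜 := ℂ) (f (γ s) • Pm s)) x) : ℂ)
          = f (γ s) * inner (𝕜 := ℂ) y ((Matrix.toEuclideanCLM (𝕜 := ℂ) (Pm s)) x) := by
        rw [_root_.map_smul, ContinuousLinearMap.smul_apply, inner_smul_right]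
      rw [h1, norm_mul]
      have h2 := psd_inner_le (hPmpsd s) x y
      have h3 : ‖f (γ s)‖ ≤ 1 := by
        exact hfbound s hs
      calc ‖f (γ s)‖ * ‖(inner (𝕜 := ℂ) y ((Matrix.toEuclideanCLM (𝕜 := ℂ) (Pm s)) x) : ℂ)‖
          ≤ 1 * ‖(inner (𝕜 := ℂ) y ((Matrix.toEuclideanCLM (𝕜 := ℂ) (Pm s)) x) : ℂ)‖ := by
            gcongr
        _ = ‖(inner (𝕜 := ℂ) y ((Matrix.toEuclideanCLM (𝕜 := ℂ) (Pm s)) x) : ℂ)‖ := one_mul _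
        _ ≤ ((inner ℂ ((Matrix.toEuclideanCLM (𝕜 := ℂ) (Pm s)) x) x : ℂ).re
            + (inner ℂ ((Matrix.toEuclideanCLM (𝕜 := ℂ) (Pm s)) y) y : ℂ).re) / 2 := h2
        _ = ((inner (𝕜 := ℂ) x ((Matrix.toEuclideanCLM (𝕜 := ℂ) (Pm s)) x) : ℂ).re
            + (inner (𝕜 := ℂ) y ((Matrix.toEuclideanCLM (𝕜 := ℂ) (Pm s)) y) : ℂ).re) / 2 := by
            rw [re_inner_comm ((Matrix.toEuclideanCLM (𝕜 := ℂ) (Pm s)) x) x,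
              re_inner_comm ((Matrix.toEuclideanCLM (𝕜 := ℂ) (Pm s)) y) y]
    calc ‖∫ s in (0:ℝ)..L, (inner (𝕜 := ℂ) y ((Matrix.toEuclideanCLM (𝕜 := ℂ) (f (γ s) • Pm s)) x) : ℂ)‖
        ≤ ∫ s in (0:ℝ)..L, ‖(inner (𝕜 := ℂ) y ((Matrix.toEuclideanCLM (𝕜 := ℂ) (f (γ s) • Pm s)) x) : ℂ)‖ :=
          intervalIntegral.norm_integral_le_integral_norm h0L
      _ ≤ ∫ s in (0:ℝ)..L,
            ((inner (𝕜 := ℂ) x ((Matrix.toEuclideanCLM (𝕜 := ℂ) (Pm s)) x) : ℂ).re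
              + (inner (𝕜 := ℂ) y ((Matrix.toEuclideanCLM (𝕜 := ℂ) (Pm s)) y) : ℂ).re) / 2 := by
          apply intervalIntegral.integral_mono_on h0L
          · exact (hΦint x y _ hfPII).norm
          · exact (((hreint x x Pm hPII).add (hreint y y Pm hPII)).div_const 2)
          · exact hbd
      _ = ((2 + δ) + (2 + δ)) / 2 := by
          rw [intervalIntegral.integral_div, intervalIntegral.integral_add
            (hreint x x Pm hPII) (hreint y y Pm hPII), quad x hx, quad y hy]
      _ = 2 + δ := by ring
  -- conclude
  show ‖(Matrix.toEuclideanCLM (𝕜 := ℂ) (fA + gAᴴ + γ₀ • (1 : Matrix (Fin n) (Fin n) ℂ)) :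
      EuclideanSpace ℂ (Fin n) →L[ℂ] EuclideanSpace ℂ (Fin n))‖ ≤ 2 + δ
  set T := Matrix.toEuclideanCLM (𝕜 := ℂ) (fA + gAᴴ + γ₀ • (1 : Matrix (Fin n) (Fin n) ℂ)) with hT
  have hunit : ∀ u : EuclideanSpace ℂ (Fin n), ‖u‖ = 1 → ‖T u‖ ≤ 2 + δ := by
    intro u hu
    rcases eq_or_ne (T u) 0 with h | h
    · rw [h, norm_zero]; exact h2δ
    · have hnTu : ‖T u‖ ≠ 0 := norm_ne_zero_iff.mpr h
      set v : EuclideanSpace ℂ (Fin n) := ((‖T u‖ : ℂ))⁻¹ • T u with hv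
      have hvn : ‖v‖ = 1 := by
        rw [hv, norm_smul]
        simp [norm_inv, hnTu]
      have hk := key u v hu hvn
      have : (inner (𝕜 := ℂ) v (T u) : ℂ) = (‖T u‖ : ℂ) := by
        rw [hv, inner_smul_left, ← Complex.ofReal_inv, Complex.conj_ofReal,
          inner_self_eq_norm_sq_to_K]
        norm_cast
        have h' : (‖T u‖⁻¹ * ‖T u‖ ^ 2 : ℝ) = ‖T u‖ := by rw [inv_mul_eq_iff_eq_mul₀ hnTu]; ring
        rw [← Complex.coe_algebraMap]
        exact_mod_cast congrArg (fun r : ℝ => (r : ℂ)) h'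
      rw [hT] at this
      rw [this] at hk
      rwa [Complex.norm_real, Real.norm_eq_abs, _root_.abs_of_nonneg (norm_nonneg _)] at hk
  apply ContinuousLinearMap.opNorm_le_bound _ h2δ
  intro x
  rcases eq_or_ne x 0 with rfl | hx
  · simp
  · have hnx : ‖x‖ ≠ 0 := norm_ne_zero_iff.mpr hx
    set u : EuclideanSpace ℂ (Fin n) := ((‖x‖ : ℂ))⁻¹ • x with hu
    have hun : ‖u‖ = 1 := by
      rw [hu, norm_smul]
      simp [norm_inv, hnx]
    have hxu : x = (‖x‖ : ℂ) • u := by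
      rw [hu, smul_smul]
      rw [mul_inv_cancel₀ (by exact_mod_cast hnx)]
      simp
    calc ‖T x‖ = ‖T ((‖x‖ : ℂ) • u)‖ := by rw [← hxu]
      _ = ‖x‖ * ‖T u‖ := by
          rw [ContinuousLinearMap.map_smul, norm_smul]
          simp
      _ ≤ ‖x‖ * (2 + δ) := by
          gcongr
          exact hunit u hun
      _ = (2 + δ) * ‖x‖ := by ring
end

section
/- Let n ≥ 2 and let Ψ be an n×n complex matrix whose spectrum is contained in the open unit disk. For θ ∈ ℝ and α : Fin (n−1) → ℂ with |α j| ≤ 1 for all j, define the Blaschke product of Ψ as B(θ,α)(Ψ) := exp(iθ) • ∏_{j} (Ψ − (α j)•1) * ((1 − conj(α j)•Ψ)⁻¹) (the factors pairwise commute, so the product is independent of ordering). Suppose (θ₀, α₀) maximizes the ℓ² operator norm: ‖B(θ,α)(Ψ)‖ ≤ ‖B(θ₀,α₀)(Ψ)‖ for all admissible (θ, α). Set M := B(θ₀,α₀)(Ψ) and assume ‖M‖ > 1. Then for every unit vector v ∈ EuclideanSpace ℂ (Fin n) with ‖M v‖ = ‖M‖ (i.e. v is a right singular vector of M for the largest singular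 value), one has ⟪M v, v⟫ = 0. -/
open Matrix Complex

/-!
Write `M = c₀ • F`, where `F` is the matrix Blaschke product with zeros `α₀` and `c = ⟪M v, v⟫`.
For `‖a‖ < 1` the Möbius transform `(M - a)(1 - ā M)⁻¹` is again a Blaschke product of `Ψ` of
the same degree: its zeros are the roots of `c₀ P - a Q`, where `P = ∏ (X - αⱼ)` and
`Q = ∏ (1 - ᾱⱼ X)` is the conjugate reflection of `P`, and they stay in the closed disk because
`|Q| ≤ |P|` outside it. By maximality its norm is at most `s = ‖M‖`, so
`‖M v - a v‖ ≤ s ‖v - ā M v‖`. Expanding both sides gives `2 Re (a c) ≤ |a|² (s² + 1)`, which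
fails for `a = t c̄` with `t > 0` small unless `c = 0`.
-/

open Polynomial ComplexConjugate

section InnerProduct

variable {E : Type*} [NormedAddCommGroup E] [InnerProductSpace ℂ E] {x v : E} {s : ℝ}

theorem two_mul_re_le_of_norm_sub_smul_le {a : ℂ} (hs : 1 < s) (hv : ‖v‖ = 1) (hx : ‖x‖ = s)
    (h : ‖x - a • v‖ ≤ s * ‖v - conj a • x‖) :
    2 * (a * inner ℂ x v).re ≤ ‖a‖ ^ 2 * (s ^ 2 + 1) := by
  have hleft : ‖x - a • v‖ ^ 2 = s ^ 2 - 2 * (a * inner ℂ x v).re + ‖a‖ ^ 2 := by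
    rw [norm_sub_sq (𝕜 := ℂ), inner_smul_right, norm_smul, hv, hx, mul_one, RCLike.re_to_complex]
  have hright : ‖v - conj a • x‖ ^ 2 = 1 - 2 * (a * inner ℂ x v).re + ‖a‖ ^ 2 * s ^ 2 := by
    rw [norm_sub_sq (𝕜 := ℂ), inner_smul_right, norm_smul, hv, hx, Complex.norm_conj, mul_pow,
      ← inner_conj_symm, ← map_mul, RCLike.re_to_complex, Complex.conj_re, one_pow]
  have h' := pow_le_pow_left₀ (norm_nonneg _) h 2
  rw [mul_pow, hleft, hright] at h'
  have hs' : 0 < s ^ 2 - 1 := by nlinarith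
  refine le_of_mul_le_mul_left ?_ hs'
  nlinarith

theorem inner_eq_zero_of_forall_norm_sub_smul_le (hs : 1 < s) (hv : ‖v‖ = 1) (hx : ‖x‖ = s)
    (h : ∀ a : ℂ, ‖a‖ < 1 → ‖x - a • v‖ ≤ s * ‖v - conj a • x‖) : inner ℂ x v = 0 := by
  set c := inner ℂ x v
  by_contra hc
  have hc' : 0 < ‖c‖ := norm_pos_iff.mpr hc
  set t : ℝ := (s ^ 2 + 1 + ‖c‖)⁻¹
  have ht : 0 < t := by positivity
  have ht₁ : t * (s ^ 2 + 1 + ‖c‖) = 1 := inv_mul_cancel₀ (by positivity)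
  have hnorm : ‖(t : ℂ) * conj c‖ = t * ‖c‖ := by
    rw [norm_mul, Complex.norm_conj, Complex.norm_real, Real.norm_of_nonneg ht.le]
  have hre : ((t : ℂ) * conj c * c).re = t * ‖c‖ ^ 2 := by
    rw [mul_assoc, Complex.conj_mul', ← Complex.ofReal_pow, ← Complex.ofReal_mul, Complex.ofReal_re]
  have key := two_mul_re_le_of_norm_sub_smul_le hs hv hx
    (h ((t : ℂ) * conj c) (by rw [hnorm]; nlinarith))
  rw [hre, hnorm] at key
  have key' : t * ‖c‖ ^ 2 * 2 ≤ t * ‖c‖ ^ 2 * (t * (s ^ 2 + 1)) := by linarith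
  have := le_of_mul_le_mul_left key' (by positivity)
  nlinarith

end InnerProduct

theorem norm_sub_smul_le_of_mul_eq {n : ℕ} {A M : Matrix (Fin n) (Fin n) ℂ} {a : ℂ}
    (h : A * (1 - conj a • M) = M - a • 1) (v : EuclideanSpace ℂ (Fin n)) :
    ‖toEuclideanCLM (𝕜 := ℂ) M v - a • v‖ ≤
      l2opNorm A * ‖v - conj a • toEuclideanCLM (𝕜 := ℂ) M v‖ := by
  have h' := congrArg (fun A => toEuclideanCLM (𝕜 := ℂ) A v) h
  simp only [map_mul, map_sub, map_smul, map_one, mul_apply_eq_comp, _root_.sub_apply,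
    _root_.smul_apply, one_apply_eq_self] at h'
  rw [← h', ← map_smul, ← map_sub]
  exact (toEuclideanCLM (𝕜 := ℂ) A).le_opNorm _

namespace Blaschke

noncomputable def numerator (l : List ℂ) : ℂ[X] := (l.map fun α => X - C α).prod

noncomputable def denominator (l : List ℂ) : ℂ[X] :=
  (l.map fun α => 1 - C (conj α) * X).prod

@[simp] theorem numerator_nil : numerator [] = 1 := rfl

@[simp] theorem numerator_cons (α : ℂ) (l : List ℂ) :
    numerator (α :: l) = (X - C α) * numerator l := List.prod_cons

@[simp] theorem denominator_nil : denominator [] = 1 := rfl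

@[simp] theorem denominator_cons (α : ℂ) (l : List ℂ) :
    denominator (α :: l) = (1 - C (conj α) * X) * denominator l := List.prod_cons

theorem numerator_monic (l : List ℂ) : (numerator l).Monic := by
  induction l with
  | nil => exact monic_one
  | cons α l ih => exact (monic_X_sub_C α).mul ih

theorem natDegree_numerator (l : List ℂ) : (numerator l).natDegree = l.length := by
  induction l with
  | nil => simp
  | cons α l ih =>
    rw [numerator_cons, (monic_X_sub_C α).natDegree_mul (numerator_monic l), ih,
      natDegree_X_sub_C, List.length_cons, add_comm]

theorem reflect_map_conj_numerator (l : List ℂ) :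
    ((numerator l).map (starRingEnd ℂ)).reflect l.length = denominator l := by
  induction l with
  | nil => simp
  | cons α l ih =>
    have h₁ : ((X - C α).map (starRingEnd ℂ)).natDegree ≤ 1 := by simp
    have h₂ := (natDegree_map_le (f := starRingEnd ℂ) (p := numerator l)).trans
      (natDegree_numerator l).le
    rw [numerator_cons, Polynomial.map_mul, List.length_cons, add_comm, reflect_mul _ _ h₁ h₂, ih,
      denominator_cons]
    congr 1
    rw [Polynomial.map_sub, map_X, map_C, reflect_sub, reflect_one_X, reflect_C, pow_one]

theorem reflect_map_conj_denominator (l : List ℂ) :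
    ((denominator l).map (starRingEnd ℂ)).reflect l.length = numerator l := by
  rw [← reflect_map_conj_numerator, ← reflect_map, Polynomial.map_map, RingHomCompTriple.comp_eq,
    Polynomial.map_id, reflect_reflect]

theorem natDegree_denominator_le (l : List ℂ) : (denominator l).natDegree ≤ l.length := by
  rw [← reflect_map_conj_numerator]
  refine natDegree_reflect_le.trans (max_le le_rfl ?_)
  exact natDegree_map_le.trans (natDegree_numerator l).le

theorem norm_coeff_denominator_le_one {l : List ℂ} (hl : ∀ α ∈ l, ‖α‖ ≤ 1) :
    ‖(denominator l).coeff l.length‖ ≤ 1 := by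
  rw [← reflect_map_conj_numerator, coeff_reflect, revAt_le le_rfl, Nat.sub_self, coeff_map,
    Complex.norm_conj, coeff_zero_eq_eval_zero, numerator, eval_list_prod, List.norm_prod,
    List.map_map, List.map_map]
  refine (List.prod_map_le_prod_map₀ _ (fun _ => 1) (fun _ _ => norm_nonneg _) ?_).trans ?_
  · simpa using hl
  · simp

theorem C_leadingCoeff_mul_numerator_roots (p : ℂ[X]) :
    C p.leadingCoeff * numerator p.roots.toList = p := by
  conv_rhs => rw [← C_leadingCoeff_mul_prod_multiset_X_sub_C
    (IsAlgClosed.card_roots_eq_natDegree (p := p)), ← Multiset.coe_toList p.roots]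
  rw [Multiset.map_coe, Multiset.prod_coe, numerator]

theorem norm_one_sub_conj_mul_le_norm_sub {z α : ℂ} (hz : 1 ≤ ‖z‖) (hα : ‖α‖ ≤ 1) :
    ‖1 - conj α * z‖ ≤ ‖z - α‖ := by
  have key : ‖z - α‖ ^ 2 - ‖1 - conj α * z‖ ^ 2 = (‖z‖ ^ 2 - 1) * (1 - ‖α‖ ^ 2) := by
    simp only [Complex.sq_norm, Complex.normSq_apply, Complex.sub_re, Complex.sub_im,
      Complex.mul_re, Complex.mul_im, Complex.conj_re, Complex.conj_im, Complex.one_re,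
      Complex.one_im]
    ring
  have : 0 ≤ (‖z‖ ^ 2 - 1) * (1 - ‖α‖ ^ 2) := by
    apply mul_nonneg <;> nlinarith [norm_nonneg z, norm_nonneg α]
  exact (sq_le_sq₀ (norm_nonneg _) (norm_nonneg _)).mp (by linarith)

theorem norm_eval_denominator_le {z : ℂ} (hz : 1 ≤ ‖z‖) {l : List ℂ} (hl : ∀ α ∈ l, ‖α‖ ≤ 1) :
    ‖(denominator l).eval z‖ ≤ ‖(numerator l).eval z‖ := by
  induction l with
  | nil => simp
  | cons α l ih =>
    simp only [List.forall_mem_cons] at hl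
    simp only [denominator_cons, numerator_cons, eval_mul, norm_mul, eval_sub, eval_one, eval_C,
      eval_X]
    gcongr
    exacts [norm_one_sub_conj_mul_le_norm_sub hz hl.1, ih hl.2]

theorem eval_numerator_ne_zero {z : ℂ} (hz : 1 < ‖z‖) {l : List ℂ} (hl : ∀ α ∈ l, ‖α‖ ≤ 1) :
    (numerator l).eval z ≠ 0 := by
  induction l with
  | nil => simp
  | cons α l ih =>
    simp only [List.forall_mem_cons] at hl
    rw [numerator_cons, eval_mul, eval_sub, eval_X, eval_C]
    refine mul_ne_zero (sub_ne_zero.mpr ?_) (ih hl.2)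
    rintro rfl
    exact (hl.1.trans_lt hz).false

theorem norm_le_one_of_isRoot {c₀ a z : ℂ} (hc₀ : ‖c₀‖ = 1) (ha : ‖a‖ < 1) {l : List ℂ}
    (hl : ∀ α ∈ l, ‖α‖ ≤ 1) (hz : (C c₀ * numerator l - C a * denominator l).IsRoot z) :
    ‖z‖ ≤ 1 := by
  by_contra! hz₁
  have hP : 0 < ‖(numerator l).eval z‖ := norm_pos_iff.mpr (eval_numerator_ne_zero hz₁ hl)
  have hQ := norm_eval_denominator_le hz₁.le hl
  have h : c₀ * (numerator l).eval z = a * (denominator l).eval z := by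
    simpa [sub_eq_zero] using hz
  have h' := congrArg norm h
  rw [norm_mul, norm_mul, hc₀, one_mul] at h'
  nlinarith [norm_nonneg a]

theorem exists_sub_eq_C_mul_numerator {c₀ a : ℂ} (hc₀ : ‖c₀‖ = 1) (ha : ‖a‖ < 1) {l : List ℂ}
    (hl : ∀ α ∈ l, ‖α‖ ≤ 1) :
    ∃ (L : ℂ) (r : List ℂ), L ≠ 0 ∧ r.length = l.length ∧ (∀ β ∈ r, ‖β‖ ≤ 1) ∧
      C c₀ * numerator l - C a * denominator l = C L * numerator r := by
  set N := C c₀ * numerator l - C a * denominator l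
  have hdeg : N.natDegree ≤ l.length := (natDegree_sub_le _ _).trans <| max_le
    ((natDegree_C_mul_le _ _).trans (natDegree_numerator l).le)
    ((natDegree_C_mul_le _ _).trans (natDegree_denominator_le l))
  -- `‖a * (denominator l).coeff l.length‖ < 1 = ‖c₀‖`: no zero of `N` escapes to infinity.
  have hlead : N.coeff l.length ≠ 0 := by
    have h₁ : (numerator l).coeff l.length = 1 := by
      simpa [natDegree_numerator] using (numerator_monic l).coeff_natDegree
    rw [coeff_sub, coeff_C_mul, coeff_C_mul, h₁, mul_one, sub_ne_zero]
    intro h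
    have h' := congrArg norm h
    rw [hc₀, norm_mul] at h'
    nlinarith [norm_nonneg a, norm_coeff_denominator_le_one hl,
      norm_nonneg ((denominator l).coeff l.length)]
  have hN : N.natDegree = l.length := le_antisymm hdeg (le_natDegree_of_ne_zero hlead)
  refine ⟨N.leadingCoeff, N.roots.toList, ?_, ?_, ?_, (C_leadingCoeff_mul_numerator_roots N).symm⟩
  · exact leadingCoeff_ne_zero.mpr fun h => hlead (by simp [h])
  · rw [Multiset.length_toList, IsAlgClosed.card_roots_eq_natDegree, hN]
  · exact fun β hβ =>
      norm_le_one_of_isRoot hc₀ ha hl (isRoot_of_mem_roots (Multiset.mem_toList.mp hβ))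

theorem conj_sub_eq_C_mul_denominator {c₀ a L : ℂ} {l r : List ℂ} (hr : r.length = l.length)
    (h : C c₀ * numerator l - C a * denominator l = C L * numerator r) :
    C (conj c₀) * denominator l - C (conj a) * numerator l = C (conj L) * denominator r := by
  have h' := congrArg (fun p => (p.map (starRingEnd ℂ)).reflect l.length) h
  simp only [Polynomial.map_sub, Polynomial.map_mul, map_C, reflect_sub, reflect_C_mul,
    reflect_map_conj_numerator, reflect_map_conj_denominator] at h'
  rwa [← hr, reflect_map_conj_numerator] at h'

section Matrix

variable {ι : Type*} [Fintype ι] [DecidableEq ι] (Ψ : Matrix ι ι ℂ)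

noncomputable def factor (α : ℂ) : Matrix ι ι ℂ := (Ψ - α • 1) * (1 - conj α • Ψ)⁻¹

noncomputable def product (l : List ℂ) : Matrix ι ι ℂ := (l.map (factor Ψ)).prod

variable {Ψ}

theorem isUnit_one_sub_smul (hΨ : spectrum ℂ Ψ ⊆ Metric.ball 0 1) {c : ℂ} (hc : ‖c‖ ≤ 1) :
    IsUnit (1 - c • Ψ) := by
  rcases eq_or_ne c 0 with rfl | hc₀
  · simp
  have hinv : c⁻¹ ∉ spectrum ℂ Ψ := fun h => by
    have := hΨ h
    rw [Metric.mem_ball, dist_zero_right, norm_inv] at this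
    exact not_lt.mpr hc ((inv_lt_one₀ (norm_pos_iff.mpr hc₀)).mp this)
  have h : 1 - c • Ψ = Units.mk0 c hc₀ • (algebraMap ℂ (Matrix ι ι ℂ) c⁻¹ - Ψ) := by
    rw [Units.smul_mk0, Algebra.algebraMap_eq_smul_one, smul_sub, smul_smul, mul_inv_cancel₀ hc₀,
      one_smul]
  rw [h, isUnit_smul_iff]
  exact spectrum.notMem_iff.mp hinv

theorem aeval_numerator_cons (α : ℂ) (l : List ℂ) :
    aeval Ψ (numerator (α :: l)) = (Ψ - α • 1) * aeval Ψ (numerator l) := by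
  rw [numerator_cons, map_mul, map_sub, aeval_X, aeval_C, Algebra.algebraMap_eq_smul_one]

theorem aeval_denominator_cons (α : ℂ) (l : List ℂ) :
    aeval Ψ (denominator (α :: l)) = aeval Ψ (denominator l) * (1 - conj α • Ψ) := by
  rw [denominator_cons, mul_comm, map_mul, map_sub, map_one, map_mul, aeval_X, aeval_C,
    Algebra.smul_def]

theorem isUnit_aeval_denominator {l : List ℂ} (hl : ∀ α ∈ l, IsUnit (1 - conj α • Ψ)) :
    IsUnit (aeval Ψ (denominator l)) := by
  induction l with
  | nil => simp
  | cons α l ih =>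
    simp only [List.forall_mem_cons] at hl
    rw [aeval_denominator_cons]
    exact (ih hl.2).mul hl.1

theorem product_mul_aeval_denominator {l : List ℂ} (hl : ∀ α ∈ l, IsUnit (1 - conj α • Ψ)) :
    product Ψ l * aeval Ψ (denominator l) = aeval Ψ (numerator l) := by
  induction l with
  | nil => simp [product]
  | cons α l ih =>
    simp only [List.forall_mem_cons] at hl
    have hcomm : Commute (aeval Ψ (numerator l)) (1 - conj α • Ψ) := by
      have := (Commute.all (numerator l) (1 - C (conj α) * X)).map (aeval Ψ)
      rwa [map_sub, map_one, map_mul, aeval_C, aeval_X, ← Algebra.smul_def] at this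
    rw [product, List.map_cons, List.prod_cons, ← product, aeval_denominator_cons,
      aeval_numerator_cons, mul_assoc, ← mul_assoc (product Ψ l), ih hl.2, hcomm.eq, ← mul_assoc,
      factor, mul_assoc (Ψ - α • 1), nonsing_inv_mul _ ((isUnit_iff_isUnit_det _).mp hl.1), mul_one]

theorem exists_product_mul_one_sub_smul_eq (hΨ : spectrum ℂ Ψ ⊆ Metric.ball 0 1) {c₀ a : ℂ}
    (hc₀ : ‖c₀‖ = 1) (ha : ‖a‖ < 1) {l : List ℂ} (hl : ∀ α ∈ l, ‖α‖ ≤ 1) :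
    ∃ (c₁ : ℂ) (r : List ℂ), ‖c₁‖ = 1 ∧ r.length = l.length ∧ (∀ β ∈ r, ‖β‖ ≤ 1) ∧
      (c₁ • product Ψ r) * (1 - conj a • c₀ • product Ψ l) = c₀ • product Ψ l - a • 1 := by
  have hunit {l : List ℂ} (hl : ∀ α ∈ l, ‖α‖ ≤ 1) : ∀ α ∈ l, IsUnit (1 - conj α • Ψ) :=
    fun α hα => isUnit_one_sub_smul hΨ (by simpa using hl α hα)
  obtain ⟨L, r, hL, hr, hrl, hN⟩ := exists_sub_eq_C_mul_numerator hc₀ ha hl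
  have hD := conj_sub_eq_C_mul_denominator hr hN
  replace hN := congrArg (aeval Ψ) hN
  replace hD := congrArg (aeval Ψ) hD
  simp only [← smul_eq_C_mul, map_sub, map_smul] at hN hD
  have hc₀' : c₀ * conj c₀ = 1 := by
    rw [Complex.mul_conj, Complex.normSq_eq_norm_sq, hc₀]; norm_num
  have hL' : c₀ * conj L ≠ 0 :=
    mul_ne_zero (norm_ne_zero_iff.mp (by simp [hc₀])) (by simpa using hL)
  refine ⟨L / (c₀ * conj L), r, ?_, hr, hrl, ?_⟩
  · rw [norm_div, norm_mul, hc₀, Complex.norm_conj, one_mul, div_self (norm_ne_zero_iff.mpr hL)]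
  have hden : (1 - conj a • c₀ • product Ψ l) * aeval Ψ (denominator l) =
      (c₀ * conj L) • aeval Ψ (denominator r) := by
    rw [sub_mul, one_mul, smul_mul_assoc, smul_mul_assoc, product_mul_aeval_denominator (hunit hl),
      mul_smul, ← hD, smul_sub, smul_smul, smul_smul, hc₀', one_smul,
      smul_smul, mul_comm c₀]
  have hnum :
      (c₀ • product Ψ l - a • 1) * aeval Ψ (denominator l) = L • aeval Ψ (numerator r) := by
    rw [sub_mul, smul_mul_assoc, product_mul_aeval_denominator (hunit hl), smul_mul_assoc, one_mul,
      hN]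
  rw [← (isUnit_aeval_denominator (hunit hl)).mul_left_inj, mul_assoc, hden, hnum, mul_smul_comm,
    smul_mul_assoc, product_mul_aeval_denominator (hunit hrl), smul_smul, mul_div_cancel₀ _ hL']

end Matrix

end Blaschke

theorem optimal_blaschke_orthogonality_general
    {n : ℕ} (Ψ : Matrix (Fin n) (Fin n) ℂ)
    (hspec : spectrum ℂ Ψ ⊆ Metric.ball 0 1)
    (B : ℝ → (Fin (n - 1) → ℂ) → Matrix (Fin n) (Fin n) ℂ)
    (hB : ∀ (θ : ℝ) (α : Fin (n - 1) → ℂ),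
      B θ α = Complex.exp ((θ : ℂ) * I) •
        (List.ofFn (fun j : Fin (n - 1) =>
          (Ψ - α j • (1 : Matrix (Fin n) (Fin n) ℂ)) *
            ((1 : Matrix (Fin n) (Fin n) ℂ) - (starRingEnd ℂ) (α j) • Ψ)⁻¹)).prod)
    (θ₀ : ℝ) (α₀ : Fin (n - 1) → ℂ)
    (hα₀ : ∀ j, ‖α₀ j‖ ≤ 1)
    (hmax : ∀ (θ : ℝ) (α : Fin (n - 1) → ℂ), (∀ j, ‖α j‖ ≤ 1) →
      l2opNorm (B θ α) ≤ l2opNorm (B θ₀ α₀))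
    (hnorm : 1 < l2opNorm (B θ₀ α₀)) :
    ∀ v : EuclideanSpace ℂ (Fin n), ‖v‖ = 1 →
      ‖(Matrix.toEuclideanCLM (𝕜 := ℂ) (B θ₀ α₀)) v‖ = l2opNorm (B θ₀ α₀) →
      (inner ℂ ((Matrix.toEuclideanCLM (𝕜 := ℂ) (B θ₀ α₀)) v) v : ℂ) = 0 := by
  intro v hv hMv
  have hB' (θ : ℝ) (α : Fin (n - 1) → ℂ) :
      B θ α = exp (θ * I) • Blaschke.product Ψ (List.ofFn α) := by
    rw [hB, Blaschke.product, List.map_ofFn]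
    rfl
  refine inner_eq_zero_of_forall_norm_sub_smul_le hnorm hv hMv fun a ha => ?_
  obtain ⟨c₁, r, hc₁, hr, hrα, hmob⟩ := Blaschke.exists_product_mul_one_sub_smul_eq hspec
    (norm_exp_ofReal_mul_I θ₀) ha (l := List.ofFn α₀) (by simpa [List.mem_ofFn] using hα₀)
  rw [List.length_ofFn] at hr
  let β : Fin (n - 1) → ℂ := fun j => r[j.val]
  have hβ : List.ofFn β = r := List.ext_getElem (by simp [hr]) (by simp [β])
  have hc₁ : exp (c₁.arg * I) = c₁ := by simpa [hc₁] using norm_mul_exp_arg_mul_I c₁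
  rw [← hβ, ← hc₁, ← hB', ← hB'] at hmob
  calc _ ≤ l2opNorm (B c₁.arg β) * _ := norm_sub_smul_le_of_mul_eq hmob v
    _ ≤ _ := by
      gcongr
      exact hmax _ _ fun j => hrα _ (List.getElem_mem _)

theorem optimal_blaschke_orthogonality
    {n : ℕ} (hn : 2 ≤ n) (Ψ : Matrix (Fin n) (Fin n) ℂ)
    (hspec : spectrum ℂ Ψ ⊆ Metric.ball 0 1)
    (B : ℝ → (Fin (n - 1) → ℂ) → Matrix (Fin n) (Fin n) ℂ)
    (hB : ∀ (θ : ℝ) (α : Fin (n - 1) → ℂ),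
      B θ α = Complex.exp ((θ : ℂ) * I) •
        (List.ofFn (fun j : Fin (n - 1) =>
          (Ψ - α j • (1 : Matrix (Fin n) (Fin n) ℂ)) *
            ((1 : Matrix (Fin n) (Fin n) ℂ) - (starRingEnd ℂ) (α j) • Ψ)⁻¹)).prod)
    (θ₀ : ℝ) (α₀ : Fin (n - 1) → ℂ)
    (hα₀ : ∀ j, ‖α₀ j‖ ≤ 1)
    (hmax : ∀ (θ : ℝ) (α : Fin (n - 1) → ℂ), (∀ j, ‖α j‖ ≤ 1) →
      l2opNorm (B θ α) ≤ l2opNorm (B θ₀ α₀))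
    (hnorm : 1 < l2opNorm (B θ₀ α₀)) :
    ∀ v : EuclideanSpace ℂ (Fin n), ‖v‖ = 1 →
      ‖(Matrix.toEuclideanCLM (𝕜 := ℂ) (B θ₀ α₀)) v‖ = l2opNorm (B θ₀ α₀) →
      (inner ℂ ((Matrix.toEuclideanCLM (𝕜 := ℂ) (B θ₀ α₀)) v) v : ℂ) = 0 :=
  optimal_blaschke_orthogonality_general Ψ hspec B hB θ₀ α₀ hα₀ hmax hnorm
end

section
/- Let A be the 3×3 complex Jordan block with eigenvalue 0, i.e. the matrix with entries A₁₂ = A₂₃ = 1 and all other entries 0. Let 0 < r ≤ 1. Then sSup { ‖p(A)‖ : p a complex polynomial with sup_{z ∈ closedBall(0,r)} |p(z)| ≤ 1 } = 1/r², where p(A) denotes the evaluation of p at A and ‖·‖ is the ℓ² operator norm. In particular, for every polynomial p with sup_{|z| ≤ r} |p(z)| ≤ 1 one has ‖p(A)‖ ≤ 1/r², and the polynomial p(z) = z²/r² attains this value. -/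
/-!
For the nilpotent Jordan block `J`, conjugating by `D = diag(1, r, …, r^(n-1))` turns `p(J)` into
`D q(J) D⁻¹` with `q(z) = p(r z)`. As `‖D‖ ≤ 1` and `‖D⁻¹‖ = r^(1-n)`, it suffices to show
`‖q(J)‖ ≤ 1` whenever `|q| ≤ 1` on the unit circle. Read `x ∈ ℂⁿ` as the polynomial `P` whose
coefficients are the entries of `x` in reverse order: then `J` acts as multiplication by `X`
followed by truncation to degree `< n`, so `q(J) x` is the reversed list of the first `n`
coefficients of `q P`. By Parseval's identity at the `m`-th roots of unity (`m > deg (q P)`), the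
coefficient ℓ²-norm of `q P` is at most that of `P`, which is `‖x‖`. The bound is attained by
`z^(n-1) / r^(n-1)`, since `J^(n-1)` has norm `1`.
-/

open Matrix Complex

open Polynomial Finset ComplexConjugate

namespace IsPrimitiveRoot

variable {ζ : ℂ} {m : ℕ}

theorem sum_pow_mul_conj_pow (hζ : IsPrimitiveRoot ζ m) {j k : ℕ} (hj : j < m) (hk : k < m) :
    ∑ t ∈ range m, (ζ ^ t) ^ j * conj ((ζ ^ t) ^ k) = if j = k then (m : ℂ) else 0 := by
  have hm : m ≠ 0 := by omega
  have hnorm : ∀ t, ‖(ζ ^ t) ^ k‖ = 1 := fun t => by simp [norm_pow, hζ.norm'_eq_one hm]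
  set w := ζ ^ j * (ζ ^ k)⁻¹
  have hterm : ∀ t, (ζ ^ t) ^ j * conj ((ζ ^ t) ^ k) = w ^ t := fun t => by
    rw [← Complex.inv_eq_conj (hnorm t), mul_pow, inv_pow, ← pow_mul, ← pow_mul, ← pow_mul,
      ← pow_mul, mul_comm t j, mul_comm t k]
  simp_rw [hterm]
  split_ifs with hjk
  · subst hjk
    simp [w, mul_inv_cancel₀ (pow_ne_zero _ (hζ.ne_zero hm))]
  · have hw : w ≠ 1 := fun h => hjk (hζ.pow_inj hj hk
      (by rw [← mul_inv_eq_one₀ (pow_ne_zero _ (hζ.ne_zero hm))]; exact h))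
    have hwm : w ^ m = 1 := by
      rw [mul_pow, inv_pow, ← pow_mul, ← pow_mul, mul_comm j, mul_comm k, pow_mul, pow_mul,
        hζ.pow_eq_one]
      simp
    rw [geom_sum_eq hw, hwm, sub_self, zero_div]

theorem sum_norm_sq_eval_pow (hζ : IsPrimitiveRoot ζ m) {P : ℂ[X]} (hP : P.natDegree < m) :
    ∑ t ∈ range m, ‖P.eval (ζ ^ t)‖ ^ 2 = m * ∑ j ∈ range m, ‖P.coeff j‖ ^ 2 := by
  suffices h : (↑(∑ t ∈ range m, ‖P.eval (ζ ^ t)‖ ^ 2) : ℂ) =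
      ↑(m * ∑ j ∈ range m, ‖P.coeff j‖ ^ 2) by exact_mod_cast h
  push_cast
  simp_rw [← Complex.mul_conj', eval_eq_sum_range' hP, map_sum, sum_mul_sum, mul_sum]
  rw [sum_comm]
  refine sum_congr rfl fun j hj => ?_
  rw [sum_comm]
  calc ∑ k ∈ range m, ∑ t ∈ range m, P.coeff j * (ζ ^ t) ^ j * conj (P.coeff k * (ζ ^ t) ^ k)
      = ∑ k ∈ range m, P.coeff j * conj (P.coeff k) * (if j = k then (m : ℂ) else 0) := by
        refine sum_congr rfl fun k hk => ?_
        rw [← sum_pow_mul_conj_pow hζ (mem_range.1 hj) (mem_range.1 hk), mul_sum]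
        refine sum_congr rfl fun t _ => ?_
        rw [map_mul]
        ring
    _ = m * (P.coeff j * conj (P.coeff j)) := by
        simp_rw [mul_ite, mul_zero]
        rw [sum_ite_eq, if_pos hj, mul_comm]

end IsPrimitiveRoot

theorem Polynomial.sum_norm_sq_coeff_mul_le {q P : ℂ[X]}
    (hq : ∀ z : ℂ, ‖z‖ = 1 → ‖q.eval z‖ ≤ 1) {m : ℕ} (hm : q.natDegree + P.natDegree < m) :
    ∑ j ∈ range m, ‖(q * P).coeff j‖ ^ 2 ≤ ∑ j ∈ range m, ‖P.coeff j‖ ^ 2 := by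
  have hm0 : m ≠ 0 := by omega
  have hζ := Complex.isPrimitiveRoot_exp m hm0
  set ζ := Complex.exp (2 * Real.pi * Complex.I / m)
  have hqP : (q * P).natDegree < m := natDegree_mul_le.trans_lt hm
  refine le_of_mul_le_mul_left ?_ (by positivity : (0 : ℝ) < m)
  rw [← hζ.sum_norm_sq_eval_pow hqP, ← hζ.sum_norm_sq_eval_pow (by omega)]
  refine sum_le_sum fun t _ => ?_
  have hqt : ‖q.eval (ζ ^ t)‖ ≤ 1 := hq _ (by rw [norm_pow, hζ.norm'_eq_one hm0, one_pow])
  rw [eval_mul, norm_mul, mul_pow]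
  exact mul_le_of_le_one_left (by positivity) (pow_le_one₀ (norm_nonneg _) hqt)

theorem Polynomial.sum_range_norm_sq_coeff_ofFn {R : Type*} [NormedRing R] [DecidableEq R] {n m : ℕ}
    (v : Fin n → R) (hm : n ≤ m) :
    ∑ k ∈ range m, ‖(ofFn n v).coeff k‖ ^ 2 = ∑ i, ‖v i‖ ^ 2 := by
  have htail : ∑ k ∈ Ico n m, ‖(ofFn n v).coeff k‖ ^ 2 = 0 :=
    sum_eq_zero fun k hk => by simp [ofFn_coeff_eq_zero_of_ge _ (mem_Ico.1 hk).1]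
  rw [← sum_range_add_sum_Ico _ hm, htail, add_zero,
    ← Fin.sum_univ_eq_sum_range (fun k => ‖(ofFn n v).coeff k‖ ^ 2)]
  simp

theorem Polynomial.norm_eval_C_mul_X_pow_le {r : ℝ} (hr0 : 0 < r) (k : ℕ) :
    ∀ z ∈ Metric.closedBall (0 : ℂ) r, ‖(C (1 / (r : ℂ) ^ k) * X ^ k).eval z‖ ≤ 1 := by
  intro z hz
  rw [mem_closedBall_zero_iff] at hz
  simp only [eval_mul, eval_C, eval_pow, eval_X, norm_mul, norm_div, norm_one, norm_pow,
    Complex.norm_real, Real.norm_of_nonneg hr0.le]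
  rw [div_mul_eq_mul_div, one_mul, div_le_one (by positivity)]
  exact pow_le_pow_left₀ (norm_nonneg z) hz k

theorem SemiconjBy.aeval {R A : Type*} [CommSemiring R] [Semiring A] [Algebra R A] {d a b : A}
    (h : SemiconjBy d a b) (p : R[X]) : SemiconjBy d (aeval a p) (aeval b p) := by
  induction p using Polynomial.induction_on with
  | C c => rw [aeval_C, aeval_C]; exact (Algebra.commutes c d).symm
  | add p q hp hq => simpa only [map_add] using hp.add_right hq
  | monomial k c ih => simpa only [pow_succ, ← mul_assoc, map_mul, aeval_X] using ih.mul_right h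

namespace Matrix

variable {R : Type*} [CommSemiring R] {n : ℕ}

variable (R n) in
def jordanBlock : Matrix (Fin n) (Fin n) R := of fun i j => if (i : ℕ) + 1 = j then 1 else 0

theorem jordanBlock_three : jordanBlock R 3 = !![0, 1, 0; 0, 0, 1; 0, 0, 0] := by
  ext i j
  fin_cases i <;> fin_cases j <;> rfl

theorem jordanBlock_mulVec_apply (x : Fin n → R) (i : Fin n) :
    (jordanBlock R n *ᵥ x) i = if h : (i : ℕ) + 1 < n then x ⟨i + 1, h⟩ else 0 := by
  simp only [mulVec, dotProduct, jordanBlock, of_apply, ite_mul, one_mul, zero_mul]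
  split_ifs with h
  · rw [sum_eq_single ⟨i + 1, h⟩ (fun j _ hj => if_neg fun hij => hj (Fin.ext hij.symm))
      (by simp), if_pos rfl]
  · exact sum_eq_zero fun j _ => if_neg fun hj => h (by omega)

theorem jordanBlock_pow_mulVec_apply (k : ℕ) (x : Fin n → R) (i : Fin n) :
    (jordanBlock R n ^ k *ᵥ x) i = if h : (i : ℕ) + k < n then x ⟨i + k, h⟩ else 0 := by
  induction k generalizing x with
  | zero => simp
  | succ k ih =>
    simp only [pow_succ, ← mulVec_mulVec, ih, jordanBlock_mulVec_apply]
    split_ifs <;> first | rfl | omega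

theorem aeval_jordanBlock_mulVec_apply [DecidableEq R] (p : R[X]) (x : Fin n → R) (i : Fin n) :
    (aeval (jordanBlock R n) p *ᵥ x) i = (p * ofFn n (x ∘ Fin.rev)).coeff (Fin.rev i) := by
  induction p using Polynomial.induction_on' with
  | add p q hp hq => rw [map_add, add_mulVec, Pi.add_apply, hp, hq, add_mul, coeff_add]
  | monomial k a =>
    rw [aeval_monomial, ← Algebra.smul_def, smul_mulVec, Pi.smul_apply,
      jordanBlock_pow_mulVec_apply, ← C_mul_X_pow_eq_monomial, mul_assoc, coeff_C_mul,
      coeff_X_pow_mul', smul_eq_mul, Fin.val_rev]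
    have hi := i.isLt
    congr 1
    split_ifs with h h' h'
    · rw [ofFn_coeff_eq_val_of_lt _ (by omega), Function.comp_apply]
      congr 1
      ext
      simp only [Fin.val_rev]
      omega
    all_goals first | rfl | omega

theorem diagonal_pow_semiconjBy_jordanBlock (r : R) :
    SemiconjBy (diagonal fun i : Fin n => r ^ (i : ℕ)) (r • jordanBlock R n) (jordanBlock R n) := by
  ext i j
  simp only [diagonal_mul, mul_diagonal, smul_apply, jordanBlock, of_apply, smul_eq_mul]
  split_ifs with h
  · rw [← h, pow_succ]; ring
  · simp

theorem aeval_smul_jordanBlock (r : R) (p : R[X]) :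
    aeval (r • jordanBlock R n) p = aeval (jordanBlock R n) (p.comp (C r * X)) := by
  rw [aeval_comp, map_mul, aeval_C, aeval_X, Algebra.smul_def]

open scoped Matrix.Norms.L2Operator

theorem norm_aeval_jordanBlock_le_one {q : ℂ[X]} (hq : ∀ z : ℂ, ‖z‖ = 1 → ‖q.eval z‖ ≤ 1) :
    ‖aeval (jordanBlock ℂ n) q‖ ≤ 1 := by
  refine ContinuousLinearMap.opNorm_le_bound _ zero_le_one fun x => ?_
  set P := ofFn n (x ∘ Fin.rev)
  have hm : q.natDegree + P.natDegree < q.natDegree + n + 1 := by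
    have : P.natDegree ≤ n := natDegree_le_of_degree_le (ofFn_degree_lt _).le
    omega
  rw [one_mul, ← sq_le_sq₀ (norm_nonneg _) (norm_nonneg _), EuclideanSpace.norm_sq_eq,
    EuclideanSpace.norm_sq_eq]
  calc ∑ i, ‖toEuclideanCLM (𝕜 := ℂ) (aeval (jordanBlock ℂ n) q) x i‖ ^ 2
      = ∑ i : Fin n, ‖(q * P).coeff i‖ ^ 2 := by
        rw [← Equiv.sum_comp Fin.revPerm]
        simp [aeval_jordanBlock_mulVec_apply, P]
    _ ≤ ∑ k ∈ range (q.natDegree + n + 1), ‖(q * P).coeff k‖ ^ 2 := by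
        rw [Fin.sum_univ_eq_sum_range (fun k => ‖(q * P).coeff k‖ ^ 2)]
        exact sum_le_sum_of_subset_of_nonneg (range_subset_range.2 (by omega))
          fun _ _ _ => by positivity
    _ ≤ ∑ k ∈ range (q.natDegree + n + 1), ‖P.coeff k‖ ^ 2 := sum_norm_sq_coeff_mul_le hq hm
    _ = ∑ i, ‖x i‖ ^ 2 := by
        rw [sum_range_norm_sq_coeff_ofFn _ (by omega), ← Equiv.sum_comp Fin.revPerm]
        simp

theorem norm_aeval_jordanBlock_le {r : ℝ} (hr0 : 0 < r) (hr1 : r ≤ 1) {p : ℂ[X]}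
    (hp : ∀ z ∈ Metric.closedBall (0 : ℂ) r, ‖p.eval z‖ ≤ 1) :
    ‖aeval (jordanBlock ℂ n) p‖ ≤ 1 / r ^ (n - 1) := by
  set D := diagonal fun i : Fin n => (r : ℂ) ^ (i : ℕ)
  set D' := diagonal fun i : Fin n => (r : ℂ)⁻¹ ^ (i : ℕ)
  set q := p.comp (C (r : ℂ) * X)
  have hq : ∀ z : ℂ, ‖z‖ = 1 → ‖q.eval z‖ ≤ 1 := fun z hz => by
    have hrz : ‖(r : ℂ) * z‖ ≤ r := by simp [hz, abs_of_pos hr0]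
    simpa [q] using hp _ (mem_closedBall_zero_iff.2 hrz)
  have hDD' : D * D' = 1 := by
    rw [diagonal_mul_diagonal, ← diagonal_one]
    congr 1
    ext i
    rw [← mul_pow, mul_inv_cancel₀ (by exact_mod_cast hr0.ne'), one_pow]
  have hD : ‖D‖ ≤ 1 := by
    rw [l2_opNorm_diagonal, pi_norm_le_iff_of_nonneg zero_le_one]
    intro i
    simpa [abs_of_pos hr0] using pow_le_one₀ hr0.le hr1
  have hD' : ‖D'‖ ≤ 1 / r ^ (n - 1) := by
    rw [l2_opNorm_diagonal, pi_norm_le_iff_of_nonneg (by positivity)]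
    intro i
    rw [norm_pow, norm_inv, Complex.norm_real, Real.norm_of_nonneg hr0.le, one_div, ← inv_pow]
    exact pow_le_pow_right₀ (one_le_inv₀ hr0 |>.2 hr1) (by omega)
  calc ‖aeval (jordanBlock ℂ n) p‖
      = ‖D * aeval (jordanBlock ℂ n) q * D'‖ := by
        rw [← aeval_smul_jordanBlock, ((diagonal_pow_semiconjBy_jordanBlock _).aeval p).eq,
          mul_assoc, hDD', mul_one]
    _ ≤ ‖D‖ * ‖aeval (jordanBlock ℂ n) q‖ * ‖D'‖ := norm_mul₃_le
    _ ≤ 1 * 1 * (1 / r ^ (n - 1)) := by gcongr; exact norm_aeval_jordanBlock_le_one hq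
    _ = 1 / r ^ (n - 1) := by ring

theorem one_le_norm_jordanBlock_pow_pred (hn : 0 < n) : 1 ≤ ‖jordanBlock ℂ n ^ (n - 1)‖ := by
  set e := EuclideanSpace.single (⟨n - 1, by omega⟩ : Fin n) (1 : ℂ)
  calc (1 : ℝ) = ‖toEuclideanCLM (𝕜 := ℂ) (jordanBlock ℂ n ^ (n - 1)) e ⟨0, hn⟩‖ := by
        rw [ofLp_toEuclideanCLM, jordanBlock_pow_mulVec_apply, dif_pos (by simp; omega)]
        simp [e]
    _ ≤ ‖toEuclideanCLM (𝕜 := ℂ) (jordanBlock ℂ n ^ (n - 1)) e‖ := PiLp.norm_apply_le _ _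
    _ ≤ ‖jordanBlock ℂ n ^ (n - 1)‖ * ‖e‖ := ContinuousLinearMap.le_opNorm _ _
    _ = ‖jordanBlock ℂ n ^ (n - 1)‖ := by simp [e]

theorem norm_aeval_jordanBlock_C_mul_X_pow {r : ℝ} (hr0 : 0 < r) (hr1 : r ≤ 1) (hn : 0 < n) :
    ‖aeval (jordanBlock ℂ n) (C (1 / (r : ℂ) ^ (n - 1)) * X ^ (n - 1))‖ = 1 / r ^ (n - 1) := by
  refine le_antisymm (norm_aeval_jordanBlock_le hr0 hr1 (norm_eval_C_mul_X_pow_le hr0 _)) ?_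
  have hnorm : ‖1 / (r : ℂ) ^ (n - 1)‖ = 1 / r ^ (n - 1) := by simp [abs_of_pos hr0]
  rw [map_mul, aeval_C, aeval_X_pow, ← Algebra.smul_def, norm_smul, hnorm]
  exact le_mul_of_one_le_right (by positivity) (one_le_norm_jordanBlock_pow_pred hn)

theorem isGreatest_norm_aeval_jordanBlock {r : ℝ} (hr0 : 0 < r) (hr1 : r ≤ 1) (hn : 0 < n) :
    IsGreatest {x : ℝ | ∃ p : ℂ[X], (∀ z ∈ Metric.closedBall (0 : ℂ) r, ‖p.eval z‖ ≤ 1) ∧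
      x = ‖aeval (jordanBlock ℂ n) p‖} (1 / r ^ (n - 1)) :=
  ⟨⟨_, norm_eval_C_mul_X_pow_le hr0 _, (norm_aeval_jordanBlock_C_mul_X_pow hr0 hr1 hn).symm⟩,
    fun _ ⟨_, hp, hx⟩ => hx ▸ norm_aeval_jordanBlock_le hr0 hr1 hp⟩

end Matrix

theorem jordan_block_sharp_constant
    (r : ℝ) (hr0 : 0 < r) (hr1 : r ≤ 1)
    (A : Matrix (Fin 3) (Fin 3) ℂ)
    (hA : A = !![0, 1, 0; 0, 0, 1; 0, 0, 0]) :
    sSup {x : ℝ | ∃ p : Polynomial ℂ,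
        (∀ z ∈ Metric.closedBall (0 : ℂ) r, ‖p.eval z‖ ≤ 1) ∧
        x = l2opNorm (Polynomial.aeval A p)} = 1 / r ^ 2 ∧
    (∀ p : Polynomial ℂ,
        (∀ z ∈ Metric.closedBall (0 : ℂ) r, ‖p.eval z‖ ≤ 1) →
        l2opNorm (Polynomial.aeval A p) ≤ 1 / r ^ 2) ∧
    l2opNorm (Polynomial.aeval A
        (Polynomial.C (1 / (r : ℂ) ^ 2) * Polynomial.X ^ 2)) = 1 / r ^ 2 := by
  rw [hA, ← jordanBlock_three]
  exact ⟨(isGreatest_norm_aeval_jordanBlock hr0 hr1 three_pos).csSup_eq,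
    fun _ => norm_aeval_jordanBlock_le hr0 hr1,
    norm_aeval_jordanBlock_C_mul_X_pow hr0 hr1 three_pos⟩
end

section
/- Let n ≥ 1 and L > 0. Let M : ℝ → Matrix (Fin n) (Fin n) ℂ be integrable on [0, L] such that for almost every s ∈ [0, L], M(s) is Hermitian and positive semidefinite (Re⟪M(s)x, x⟫ ≥ 0 for all x). Let f : ℝ → ℂ be measurable with |f(s)| ≤ 1 for almost every s ∈ [0, L], and assume s ↦ f(s)•M(s) is integrable on [0, L]. Then ‖∫₀ᴸ f(s)•M(s) ds‖ ≤ ‖∫₀ᴸ M(s) ds‖, where ‖·‖ is the ℓ² operator norm. -/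
/-!
For a positive operator `T`, Cauchy–Schwarz for the semi-inner product `(x, y) ↦ ⟪x, T y⟫`
followed by AM–GM gives `2 ‖⟪y, T x⟫‖ ≤ re ⟪x, T x⟫ + re ⟪y, T y⟫`. Since `‖f s‖ ≤ 1`, integrating
this pointwise bound for `T = M s` yields `2 ‖⟪y, A x⟫‖ ≤ re ⟪x, B x⟫ + re ⟪y, B y⟫` for
`A = ∫ f • M` and `B = ∫ M`; for unit vectors the right-hand side is at most `2 ‖B‖`, so
`‖A‖ ≤ ‖B‖`. Working with the sum rather than the product of the two quadratic forms makes the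
bound linear in `M`, so no integral Cauchy–Schwarz inequality is needed.
-/

open Matrix MeasureTheory Complex

attribute [local instance] Matrix.normedAddCommGroup Matrix.normedSpace

open scoped InnerProductSpace

namespace ContinuousLinearMap

variable {𝕜 E : Type*} [RCLike 𝕜] [NormedAddCommGroup E] [InnerProductSpace 𝕜 E]

namespace IsPositive

variable {T : E →L[𝕜] E}

abbrev preInnerProductCore (hT : T.IsPositive) : PreInnerProductSpace.Core 𝕜 E where
  inner x y := ⟪x, T y⟫_𝕜
  conj_inner_symm x y := by rw [inner_conj_symm, hT.inner_left_eq_inner_right]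
  re_inner_nonneg := hT.re_inner_nonneg_right
  add_left x y z := inner_add_left x y (T z)
  smul_left x y r := inner_smul_left x (T y) r

theorem norm_inner_sq_le (hT : T.IsPositive) (x y : E) :
    ‖⟪x, T y⟫_𝕜‖ ^ 2 ≤ RCLike.re ⟪x, T x⟫_𝕜 * RCLike.re ⟪y, T y⟫_𝕜 :=
  calc ‖⟪x, T y⟫_𝕜‖ ^ 2 = ‖⟪x, T y⟫_𝕜‖ * ‖⟪y, T x⟫_𝕜‖ := by
        rw [sq, norm_inner_symm y, hT.inner_left_eq_inner_right]
    _ ≤ _ := @InnerProductSpace.Core.inner_mul_inner_self_le 𝕜 E _ _ _ hT.preInnerProductCore x y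

theorem two_mul_norm_inner_le (hT : T.IsPositive) (x y : E) :
    2 * ‖⟪x, T y⟫_𝕜‖ ≤ RCLike.re ⟪x, T x⟫_𝕜 + RCLike.re ⟪y, T y⟫_𝕜 := by
  nlinarith [hT.norm_inner_sq_le x y, hT.re_inner_nonneg_right x, hT.re_inner_nonneg_right y,
    sq_nonneg (RCLike.re ⟪x, T x⟫_𝕜 - RCLike.re ⟪y, T y⟫_𝕜), norm_nonneg ⟪x, T y⟫_𝕜]

end IsPositive

theorem re_inner_self_apply_le_opNorm (T : E →L[𝕜] E) {x : E} (hx : ‖x‖ = 1) :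
    RCLike.re ⟪x, T x⟫_𝕜 ≤ ‖T‖ :=
  (re_inner_le_norm x (T x)).trans <| by simpa [hx] using T.le_opNorm x

variable {α : Type*} [MeasurableSpace α] {μ : Measure α}
  [CompleteSpace E] [NormedSpace ℝ E] [SMulCommClass 𝕜 ℝ E] {T : α → E →L[𝕜] E}

theorem integral_inner_apply (hT : Integrable T μ) (x y : E) :
    ∫ a, ⟪x, T a y⟫_𝕜 ∂μ = ⟪x, (∫ a, T a ∂μ) y⟫_𝕜 := by
  rw [integral_apply hT, integral_inner (hT.apply_continuousLinearMap y)]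

theorem integral_re_inner_apply (hT : Integrable T μ) (x y : E) :
    ∫ a, RCLike.re ⟪x, T a y⟫_𝕜 ∂μ = RCLike.re ⟪x, (∫ a, T a ∂μ) y⟫_𝕜 := by
  rw [integral_re ((hT.apply_continuousLinearMap y).const_inner x), integral_inner_apply hT]

theorem two_mul_norm_inner_integral_smul_apply_le (hT : Integrable T μ)
    (hpos : ∀ᵐ a ∂μ, (T a).IsPositive) {g : α → 𝕜} (hg : ∀ᵐ a ∂μ, ‖g a‖ ≤ 1)
    (hgT : Integrable (fun a ↦ g a • T a) μ) (x y : E) :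
    2 * ‖⟪y, (∫ a, g a • T a ∂μ) x⟫_𝕜‖ ≤
      RCLike.re ⟪y, (∫ a, T a ∂μ) y⟫_𝕜 + RCLike.re ⟪x, (∫ a, T a ∂μ) x⟫_𝕜 := by
  have hquad (z : E) : Integrable (fun a ↦ RCLike.re ⟪z, T a z⟫_𝕜) μ :=
    ((hT.apply_continuousLinearMap z).const_inner z).re
  calc 2 * ‖⟪y, (∫ a, g a • T a ∂μ) x⟫_𝕜‖
      = 2 * ‖∫ a, ⟪y, (g a • T a) x⟫_𝕜 ∂μ‖ := by rw [integral_inner_apply hgT]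
    _ ≤ ∫ a, 2 * ‖⟪y, (g a • T a) x⟫_𝕜‖ ∂μ := by
      rw [integral_const_mul]
      gcongr
      exact norm_integral_le_integral_norm _
    _ ≤ ∫ a, (RCLike.re ⟪y, T a y⟫_𝕜 + RCLike.re ⟪x, T a x⟫_𝕜) ∂μ := by
      refine integral_mono_of_nonneg (.of_forall fun a ↦ by positivity)
        ((hquad y).add (hquad x)) ?_
      filter_upwards [hpos, hg] with a ha hga
      calc 2 * ‖⟪y, (g a • T a) x⟫_𝕜‖ = ‖g a‖ * (2 * ‖⟪y, T a x⟫_𝕜‖) := by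
            rw [_root_.smul_apply, inner_smul_right, norm_mul]
            ring
        _ ≤ 2 * ‖⟪y, T a x⟫_𝕜‖ := mul_le_of_le_one_left (by positivity) hga
        _ ≤ _ := ha.two_mul_norm_inner_le y x
    _ = _ := by
      rw [integral_add (hquad y) (hquad x), integral_re_inner_apply hT, integral_re_inner_apply hT]

theorem norm_integral_smul_le_norm_integral_of_isPositive (hT : Integrable T μ)
    (hpos : ∀ᵐ a ∂μ, (T a).IsPositive) {g : α → 𝕜} (hg : ∀ᵐ a ∂μ, ‖g a‖ ≤ 1) :
    ‖∫ a, g a • T a ∂μ‖ ≤ ‖∫ a, T a ∂μ‖ := by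
  by_cases hgT : Integrable (fun a ↦ g a • T a) μ
  swap
  · rw [integral_undef hgT, norm_zero]
    exact norm_nonneg _
  refine opNorm_le_of_re_inner_le (norm_nonneg _) fun x y hx hy ↦ ?_
  set B := ∫ a, T a ∂μ
  calc RCLike.re ⟪(∫ a, g a • T a ∂μ) x, y⟫_𝕜 ≤ ‖⟪y, (∫ a, g a • T a ∂μ) x⟫_𝕜‖ :=
        (RCLike.re_le_norm _).trans (norm_inner_symm _ _).le
    _ ≤ (RCLike.re ⟪y, B y⟫_𝕜 + RCLike.re ⟪x, B x⟫_𝕜) / 2 := by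
        linarith [two_mul_norm_inner_integral_smul_apply_le hT hpos hg hgT x y]
    _ ≤ ‖B‖ := by
        linarith [B.re_inner_self_apply_le_opNorm hx, B.re_inner_self_apply_le_opNorm hy]

end ContinuousLinearMap

theorem norm_integral_smul_le_norm_integral_of_posSemidef_general
    {n : ℕ} (L : ℝ) (hL : 0 < L)
    (M : ℝ → Matrix (Fin n) (Fin n) ℂ)
    (hMint : @IntervalIntegrable _ _ NormedAddGroup.toENormedAddMonoid M volume 0 L)
    (hMpsd : ∀ᵐ s ∂volume, s ∈ Set.Icc (0 : ℝ) L →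
      (M s).IsHermitian ∧
      ∀ x : EuclideanSpace ℂ (Fin n),
        0 ≤ (inner ℂ ((Matrix.toEuclideanCLM (𝕜 := ℂ) (M s)) x) x : ℂ).re)
    (f : ℝ → ℂ)
    (hfb : ∀ᵐ s ∂volume, s ∈ Set.Icc (0 : ℝ) L → ‖f s‖ ≤ 1) :
    l2opNorm (∫ s in (0 : ℝ)..L, f s • M s) ≤ l2opNorm (∫ s in (0 : ℝ)..L, M s) := by
  have hIcc {P : ℝ → Prop} (h : ∀ᵐ s, s ∈ Set.Icc (0 : ℝ) L → P s) :
      ∀ᵐ s ∂volume.restrict (Set.Ioc 0 L), P s :=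
    (ae_restrict_iff' measurableSet_Ioc).2 <| h.mono fun s hs hsL ↦ hs (Set.Ioc_subset_Icc_self hsL)
  -- an equivalence commutes with the Bochner integral even of non-integrable functions
  let Φ := (Matrix.toEuclideanCLM (n := Fin n) (𝕜 := ℂ)).toAlgEquiv.toLinearEquiv
    |>.toContinuousLinearEquiv
  have hΦ (F : ℝ → Matrix (Fin n) (Fin n) ℂ) :
      Matrix.toEuclideanCLM (𝕜 := ℂ) (∫ s in (0 : ℝ)..L, F s) = ∫ s in Set.Ioc 0 L, Φ (F s) := by
    rw [intervalIntegral.integral_of_le hL.le]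
    exact (Φ.integral_comp_comm _).symm
  have hpos : ∀ᵐ s ∂volume.restrict (Set.Ioc 0 L), (Φ (M s)).IsPositive := by
    filter_upwards [hIcc hMpsd] with s ⟨hherm, hre⟩
    exact ⟨Matrix.isSymmetric_toEuclideanLin_iff.2 hherm, hre⟩
  rw [l2opNorm, l2opNorm, hΦ, hΦ]
  simp only [map_smul]
  exact ContinuousLinearMap.norm_integral_smul_le_norm_integral_of_isPositive
    (Φ.toContinuousLinearMap.integrable_comp hMint.1) hpos (hIcc hfb)

theorem norm_integral_smul_le_norm_integral_of_posSemidef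
    {n : ℕ} (hn : 1 ≤ n) (L : ℝ) (hL : 0 < L)
    (M : ℝ → Matrix (Fin n) (Fin n) ℂ)
    (hMint : @IntervalIntegrable _ _ NormedAddGroup.toENormedAddMonoid M volume 0 L)
    (hMpsd : ∀ᵐ s ∂volume, s ∈ Set.Icc (0 : ℝ) L →
      (M s).IsHermitian ∧
      ∀ x : EuclideanSpace ℂ (Fin n),
        0 ≤ (inner ℂ ((Matrix.toEuclideanCLM (𝕜 := ℂ) (M s)) x) x : ℂ).re)
    (f : ℝ → ℂ) (hf : Measurable f)
    (hfb : ∀ᵐ s ∂volume, s ∈ Set.Icc (0 : ℝ) L → ‖f s‖ ≤ 1)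
    (hint : @IntervalIntegrable _ _ NormedAddGroup.toENormedAddMonoid (fun s => f s • M s) volume 0 L) :
    l2opNorm (∫ s in (0 : ℝ)..L, f s • M s) ≤ l2opNorm (∫ s in (0 : ℝ)..L, M s) :=
  norm_integral_smul_le_norm_integral_of_posSemidef_general L hL M hMint hMpsd f hfb
end

section
/- Let n ≥ 1 and let M be an n×n complex matrix whose spectrum is contained in the open unit disk (so that 1 − conj(α)•M is invertible for |α| ≤ 1). Assume that for every α ∈ ℂ with |α| < 1, ‖(M − α•1) * (1 − conj(α)•M)⁻¹‖ ≤ ‖M‖, and assume ‖M‖ > 1, where ‖·‖ is the ℓ² operator norm. Then for every unit vector v ∈ EuclideanSpace ℂ (Fin n) with ‖M v‖ = ‖M‖, one has ⟪M v, v⟫ = 0. -/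
open Matrix Complex

/-! Write `T` for `M` acting on `ℂⁿ`, `m = ‖T‖ > 1` and `c = ⟪T v, v⟫`. The Möbius transform
`S_α = (T - α)(1 - ᾱ T)⁻¹` sends `v - ᾱ T v` to `T v - α v`, so `‖S_α‖ ≤ m` gives
`‖T v - α v‖ ≤ m ‖v - ᾱ T v‖`. Expanding both sides and using `‖v‖ = 1`, `‖T v‖ = m` yields
`(m² - 1) · 2 Re (α c) ≤ (m⁴ - 1) |α|²`. Since `m > 1`, the linear term `Re (α c)` is dominated by
a quadratic one on the whole unit disc, which forces `c = 0` (take `α = t c̄` with `t → 0⁺`). -/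

open ComplexConjugate Filter Topology

theorem spectrum.isUnit_one_sub_smul_of_inv_notMem {𝕜 A : Type*} [Field 𝕜] [Ring A]
    [Algebra 𝕜 A] {a : A} {z : 𝕜} (h : z⁻¹ ∉ spectrum 𝕜 a) : IsUnit (1 - z • a) := by
  rcases eq_or_ne z 0 with rfl | hz
  · simp
  let u := Units.mk0 z hz
  suffices hu : IsUnit (u⁻¹ • (1 : A) - a) by
    rwa [IsUnit.smul_sub_iff_sub_inv_smul, inv_inv u] at hu
  rwa [Units.smul_def, ← Algebra.algebraMap_eq_smul_one, ← spectrum.notMem_iff,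
    Units.val_inv_eq_inv_val, Units.val_mk0]

theorem spectrum.isUnit_one_sub_smul_of_subset_ball {𝕜 A : Type*} [NormedField 𝕜] [Ring A]
    [Algebra 𝕜 A] {a : A} (ha : spectrum 𝕜 a ⊆ Metric.ball 0 1) {z : 𝕜} (hz : ‖z‖ < 1) :
    IsUnit (1 - z • a) := by
  rcases eq_or_ne z 0 with rfl | hz0
  · simp
  refine spectrum.isUnit_one_sub_smul_of_inv_notMem fun hmem => ?_
  have hinv := mem_ball_zero_iff.mp (ha hmem)
  rw [norm_inv, inv_lt_one₀ (norm_pos_iff.mpr hz0)] at hinv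
  linarith

theorem Matrix.toEuclideanCLM_moebius_comp {ι : Type*} [Fintype ι] [DecidableEq ι]
    (M : Matrix ι ι ℂ) (α : ℂ) (h : IsUnit (1 - conj α • M)) :
    toEuclideanCLM (𝕜 := ℂ) ((M - α • 1) * (1 - conj α • M)⁻¹) ∘L
        (1 - conj α • toEuclideanCLM (𝕜 := ℂ) M) = toEuclideanCLM (𝕜 := ℂ) M - α • 1 := by
  have hcancel : (M - α • 1) * (1 - conj α • M)⁻¹ * (1 - conj α • M) = M - α • 1 :=
    nonsing_inv_mul_cancel_right _ _ ((isUnit_iff_isUnit_det _).mp h)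
  rw [← ContinuousLinearMap.mul_def, ← map_one (toEuclideanCLM (n := ι) (𝕜 := ℂ)), ← map_smul,
    ← map_sub, ← map_mul, hcancel, map_sub, map_smul, map_one]

section InnerProductSpace

variable {E : Type*} [NormedAddCommGroup E] [InnerProductSpace ℂ E]

theorem norm_sub_smul_sq (x y : E) (α : ℂ) :
    ‖x - α • y‖ ^ 2 = ‖x‖ ^ 2 - 2 * re (α * inner ℂ x y) + ‖α‖ ^ 2 * ‖y‖ ^ 2 := by
  rw [@norm_sub_sq ℂ, inner_smul_right, norm_smul, mul_pow]
  rfl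

theorem re_mul_inner_le_of_moebius_norm_le (T S : E →L[ℂ] E) (α : ℂ)
    (hS : S ∘L (1 - conj α • T) = T - α • 1) (hSn : ‖S‖ ≤ ‖T‖) (hT : 1 < ‖T‖)
    {v : E} (hv : ‖v‖ = 1) (hTv : ‖T v‖ = ‖T‖) :
    re (α * inner ℂ (T v) v) ≤ (‖T‖ ^ 2 + 1) / 2 * ‖α‖ ^ 2 := by
  set m := ‖T‖
  have hSv : S (v - conj α • T v) = T v - α • v := by simpa using congr($hS v)
  have hbound : ‖T v - α • v‖ ≤ m * ‖v - conj α • T v‖ :=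
    calc ‖T v - α • v‖ = ‖S (v - conj α • T v)‖ := by rw [hSv]
      _ ≤ ‖S‖ * ‖v - conj α • T v‖ := S.le_opNorm _
      _ ≤ m * ‖v - conj α • T v‖ := by gcongr
  have hsq := pow_le_pow_left₀ (norm_nonneg _) hbound 2
  have hre : re (conj α * inner ℂ v (T v)) = re (α * inner ℂ (T v) v) := by
    rw [← inner_conj_symm, ← map_mul, conj_re]
  rw [mul_pow, norm_sub_smul_sq, norm_sub_smul_sq, hre, hv, hTv, norm_conj] at hsq
  have hm : 0 < m ^ 2 - 1 := by nlinarith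
  nlinarith

end InnerProductSpace

theorem Complex.eq_zero_of_forall_re_mul_le_sq {c : ℂ} {K : ℝ}
    (h : ∀ α : ℂ, ‖α‖ < 1 → re (α * c) ≤ K * ‖α‖ ^ 2) : c = 0 := by
  by_contra hc
  have hsmall : ∀ᶠ t in 𝓝[>] (0 : ℝ), t * ‖c‖ < 1 ∧ K * t < 1 := by
    have hlim : Tendsto (fun t : ℝ => (t * ‖c‖, K * t)) (𝓝[>] 0) (𝓝 (0, 0)) :=
      (Continuous.tendsto' (by fun_prop) _ _ (by simp)).mono_left nhdsWithin_le_nhds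
    exact hlim.eventually (prod_mem_nhds (gt_mem_nhds one_pos) (gt_mem_nhds one_pos))
  obtain ⟨t, ⟨htc, htK⟩, ht⟩ := (hsmall.and self_mem_nhdsWithin).exists
  have hα := h (t * conj c) (by simpa [abs_of_pos ht] using htc)
  rw [mul_assoc, conj_mul', ← ofReal_pow, ← ofReal_mul, ofReal_re, norm_mul, norm_conj,
    norm_real, Real.norm_of_nonneg ht.le] at hα
  have hc2 : 0 < t * ‖c‖ ^ 2 := by positivity
  nlinarith

theorem moebius_maximal_implies_orthogonal_general
    {n : ℕ} (M : Matrix (Fin n) (Fin n) ℂ)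
    (hspec : spectrum ℂ M ⊆ Metric.ball 0 1)
    (hmax : ∀ α : ℂ, ‖α‖ < 1 →
      l2opNorm ((M - α • (1 : Matrix (Fin n) (Fin n) ℂ)) *
        ((1 : Matrix (Fin n) (Fin n) ℂ) - (starRingEnd ℂ) α • M)⁻¹) ≤ l2opNorm M)
    (hnorm : 1 < l2opNorm M) :
    ∀ v : EuclideanSpace ℂ (Fin n), ‖v‖ = 1 →
      ‖(Matrix.toEuclideanCLM (𝕜 := ℂ) M) v‖ = l2opNorm M →
      (inner ℂ ((Matrix.toEuclideanCLM (𝕜 := ℂ) M) v) v : ℂ) = 0 := by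
  intro v hv hTv
  refine eq_zero_of_forall_re_mul_le_sq (K := (l2opNorm M ^ 2 + 1) / 2) fun α hα => ?_
  have hunit : IsUnit (1 - conj α • M) :=
    spectrum.isUnit_one_sub_smul_of_subset_ball hspec (by rwa [norm_conj])
  exact re_mul_inner_le_of_moebius_norm_le _ _ α (toEuclideanCLM_moebius_comp M α hunit)
    (hmax α hα) hnorm hv hTv

theorem moebius_maximal_implies_orthogonal
    {n : ℕ} (hn : 1 ≤ n) (M : Matrix (Fin n) (Fin n) ℂ)
    (hspec : spectrum ℂ M ⊆ Metric.ball 0 1)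
    (hmax : ∀ α : ℂ, ‖α‖ < 1 →
      l2opNorm ((M - α • (1 : Matrix (Fin n) (Fin n) ℂ)) *
        ((1 : Matrix (Fin n) (Fin n) ℂ) - (starRingEnd ℂ) α • M)⁻¹) ≤ l2opNorm M)
    (hnorm : 1 < l2opNorm M) :
    ∀ v : EuclideanSpace ℂ (Fin n), ‖v‖ = 1 →
      ‖(Matrix.toEuclideanCLM (𝕜 := ℂ) M) v‖ = l2opNorm M →
      (inner ℂ ((Matrix.toEuclideanCLM (𝕜 := ℂ) M) v) v : ℂ) = 0 :=
  moebius_maximal_implies_orthogonal_general M hspec hmax hnorm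
end

section
/- Let c ∈ ℂ and R > 0, and let f : ℂ → ℂ be differentiable on the open ball of center c and radius R and continuous on the closed ball of center c and radius R. Then for every z in the open ball of center c and radius R, (2πi)⁻¹ · ∮_{|σ−c|=R} conj(f(σ))/(σ − z) dσ = conj(f(c)), where the integral is the circle integral over the circle of center c and radius R. -/
/-!
On the circle `|σ - c| = R` one has `conj (σ - c) = R² / (σ - c)` and
`conj dσ = -(conj (σ - c) / (σ - c)) dσ`. Conjugating the integral therefore turns it into the
Cauchy integral at the center, `-∮ (σ - c)⁻¹ G(σ) dσ`, of
`G(σ) = R² f(σ) / (R² + conj (c - z) (σ - c))`. Since `|c - z| < R`, the denominator of `G` has no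
zero on the closed disk, so `G` is holomorphic there and the Cauchy integral formula gives
`2πi G(c) = 2πi f(c)`.
-/

open Complex Metric
open scoped Real ComplexConjugate

theorem conj_circleIntegral (g : ℂ → ℂ) (c : ℂ) (R : ℝ) :
    conj (∮ σ in C(c, R), g σ) = -∮ σ in C(c, R), conj (σ - c) / (σ - c) * conj (g σ) := by
  rw [circleIntegral, circleIntegral, ← intervalIntegral.intervalIntegral_conj,
    ← intervalIntegral.integral_neg]
  refine intervalIntegral.integral_congr fun θ _ => ?_
  rcases eq_or_ne (circleMap 0 R θ) 0 with hw | hw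
  · simp [deriv_circleMap, circleMap_sub_center, hw]
  · simp only [deriv_circleMap, circleMap_sub_center, smul_eq_mul, map_mul, conj_I]
    field_simp

theorem conj_sub_eq_sq_div_of_mem_sphere {σ c : ℂ} {R : ℝ} (hσ : σ ∈ sphere c R) :
    conj (σ - c) = (R : ℂ) ^ 2 / (σ - c) := by
  have hnorm : ‖σ - c‖ = R := by rwa [mem_sphere, dist_eq] at hσ
  rcases eq_or_ne (σ - c) 0 with hw | hw
  · simp [hw, ← hnorm]
  · rw [eq_div_iff hw, conj_mul', hnorm]

theorem sq_add_mul_ne_zero {R : ℝ} {a w : ℂ} (ha : ‖a‖ < R) (hw : ‖w‖ ≤ R) :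
    (R : ℂ) ^ 2 + a * w ≠ 0 := by
  have hlt : ‖a * w‖ < ‖(R : ℂ) ^ 2‖ := by
    rw [norm_mul, norm_pow, norm_real, Real.norm_of_nonneg ((norm_nonneg a).trans ha.le)]
    nlinarith [norm_nonneg a, norm_nonneg w]
  intro h
  rw [add_eq_zero_iff_eq_neg] at h
  simp [h] at hlt

theorem DiffContOnCl.sq_div_sq_add_mul_smul {f : ℂ → ℂ} {c a : ℂ} {R : ℝ}
    (hf : DiffContOnCl ℂ f (ball c R)) (ha : ‖a‖ < R) :
    DiffContOnCl ℂ (fun σ => ((R : ℂ) ^ 2 / (R ^ 2 + a * (σ - c))) • f σ) (ball c R) := by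
  have hweight : DifferentiableOn ℂ (fun σ => (R : ℂ) ^ 2 / (R ^ 2 + a * (σ - c)))
      (closedBall c R) :=
    (differentiableOn_const _).div (by fun_prop) fun σ hσ =>
      sq_add_mul_ne_zero ha (by rwa [← dist_eq, ← mem_closedBall])
  exact (hweight.diffContOnCl_ball subset_rfl).smul hf

theorem conj_circleIntegral_div_sub (g : ℂ → ℂ) {c z : ℂ} {R : ℝ} (hz : z ∈ ball c R) :
    conj (∮ σ in C(c, R), g σ / (σ - z)) =
      -∮ σ in C(c, R),
        (σ - c)⁻¹ • (((R : ℂ) ^ 2 / (R ^ 2 + conj (c - z) * (σ - c))) • conj (g σ)) := by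
  have hR := pos_of_mem_ball hz
  have ha : ‖conj (c - z)‖ < R := by rwa [norm_conj, ← dist_eq, dist_comm]
  rw [conj_circleIntegral]
  congr 1
  refine circleIntegral.integral_congr hR.le fun σ hσ => ?_
  have hw : σ - c ≠ 0 := sub_ne_zero.mpr (ne_of_mem_sphere hσ hR.ne')
  have hden : (R : ℂ) ^ 2 + conj (c - z) * (σ - c) ≠ 0 :=
    sq_add_mul_ne_zero ha (by rw [← dist_eq, mem_sphere.mp hσ])
  have hconj : conj (σ - z) = conj (σ - c) + conj (c - z) := by
    rw [← map_add, sub_add_sub_cancel]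
  simp only [smul_eq_mul, map_div₀, hconj, conj_sub_eq_sq_div_of_mem_sphere hσ]
  field_simp

theorem cauchy_transform_of_conj_eq_conj_center
    (c : ℂ) (R : ℝ) (hR : 0 < R) (f : ℂ → ℂ)
    (hf : DifferentiableOn ℂ f (Metric.ball c R))
    (hfc : ContinuousOn f (Metric.closedBall c R)) :
    ∀ z ∈ Metric.ball c R,
      (2 * (π : ℂ) * I)⁻¹ * (∮ σ in C(c, R), (starRingEnd ℂ) (f σ) / (σ - z)) =
        (starRingEnd ℂ) (f c) := by
  intro z hz
  have hG := (DiffContOnCl.mk_ball hf hfc).sq_div_sq_add_mul_smul (a := conj (c - z))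
    (by rwa [norm_conj, ← dist_eq, dist_comm])
  calc (2 * (π : ℂ) * I)⁻¹ * (∮ σ in C(c, R), conj (f σ) / (σ - z))
      = conj ((2 * (π : ℂ) * I)⁻¹ • -conj (∮ σ in C(c, R), conj (f σ) / (σ - z))) := by
        simp only [smul_eq_mul, map_mul, map_neg, map_inv₀, conj_conj, conj_ofReal, conj_I,
          map_ofNat]
        ring
    _ = conj ((2 * (π : ℂ) * I)⁻¹ • ∮ σ in C(c, R),
          (σ - c)⁻¹ • (((R : ℂ) ^ 2 / (R ^ 2 + conj (c - z) * (σ - c))) • f σ)) := by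
        rw [conj_circleIntegral_div_sub _ hz, neg_neg]
        simp only [conj_conj]
    _ = conj (f c) := by
        rw [hG.two_pi_i_inv_smul_circleIntegral_sub_inv_smul (mem_ball_self hR)]
        simp [hR.ne']
end

section
/- Let n ≥ 1, let c ∈ ℂ and R > 0, and let A be an n×n complex matrix whose spectrum is contained in the open ball of center c and radius R. Let f : ℂ → ℂ be differentiable on the open ball of center c and radius R and continuous on the closed ball. Then (2πi)⁻¹ • ∮_{|σ−c|=R} conj(f(σ)) • (σ•1 − A)⁻¹ dσ = conj(f(c)) • 1, where the integral is the circle integral over the circle of center c and radius R, taken in the space of n×n complex matrices, and 1 is the identity matrix. -/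
open Matrix MeasureTheory Complex
open scoped Real
open ComplexConjugate

attribute [local instance] Matrix.normedAddCommGroup Matrix.normedSpace

/-!
On the circle `|σ - c| = R` we have `conj (σ - c) = R ^ 2 / (σ - c)`. Reversing the orientation
of the circle (`θ ↦ -θ`) therefore turns the integral into the Cauchy integral
`∮ (z - c)⁻¹ • F z` of `F z = conj (f (c + conj (z - c))) • (1 - ((z - c) / R ^ 2) • (A - c))⁻¹`.
The reflected function is holomorphic in the disk, and so is the inverse, because the spectrum
of `A - c` lies in the ball of radius `R`. Cauchy's integral formula then gives `F c = conj (f c)`.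
-/

section MatrixCalculus

variable {𝕜 : Type*} [NontriviallyNormedField 𝕜] {E : Type*} [NormedAddCommGroup E]
  [NormedSpace 𝕜 E] {ι : Type*} [Fintype ι] [DecidableEq ι] {M : E → Matrix ι ι 𝕜} {x : E}

theorem DifferentiableAt.matrix_det (hM : DifferentiableAt 𝕜 M x) :
    DifferentiableAt 𝕜 (fun y => (M y).det) x := by
  have hentry (i j : ι) : DifferentiableAt 𝕜 (fun y => M y i j) x :=
    differentiableAt_pi.1 (differentiableAt_pi.1 hM i) j
  simp only [Matrix.det_apply, Units.smul_def, zsmul_eq_mul]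
  fun_prop

theorem DifferentiableAt.matrix_updateRow (hM : DifferentiableAt 𝕜 M x) (j : ι) (v : ι → 𝕜) :
    DifferentiableAt 𝕜 (fun y => (M y).updateRow j v) x := by
  refine differentiableAt_pi.2 fun k => ?_
  rcases eq_or_ne k j with rfl | hk
  · simp
  · simpa [hk] using differentiableAt_pi.1 hM k

theorem DifferentiableAt.matrix_adjugate (hM : DifferentiableAt 𝕜 M x) :
    DifferentiableAt 𝕜 (fun y => (M y).adjugate) x := by
  refine differentiableAt_pi.2 fun i => differentiableAt_pi.2 fun j => ?_
  simp only [Matrix.adjugate_apply]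
  exact (hM.matrix_updateRow j (Pi.single i 1)).matrix_det

theorem DifferentiableAt.matrix_inv (hM : DifferentiableAt 𝕜 M x) (hdet : (M x).det ≠ 0) :
    DifferentiableAt 𝕜 (fun y => (M y)⁻¹) x := by
  simp only [Matrix.inv_def, Ring.inverse_eq_inv']
  exact (hM.matrix_det.inv hdet).smul hM.matrix_adjugate

end MatrixCalculus

theorem DiffContOnCl.conj_comp_reflect {f : ℂ → ℂ} {c : ℂ} {R : ℝ}
    (hf : DiffContOnCl ℂ f (Metric.ball c R)) :
    DiffContOnCl ℂ (fun z => conj (f (c + conj (z - c)))) (Metric.ball c R) := by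
  have hcont : Continuous fun z => c + conj (z - c) := by fun_prop
  have hmaps : Set.MapsTo (fun z => c + conj (z - c)) (Metric.ball c R) (Metric.ball c R) :=
    fun z hz => by
      rwa [Metric.mem_ball, dist_eq_norm, add_sub_cancel_left, norm_conj, ← dist_eq_norm]
  refine ⟨fun z hz => ?_, continuous_conj.comp_continuousOn
    (hf.continuousOn.comp hcont.continuousOn (hmaps.closure hcont))⟩
  have hfz : DifferentiableAt ℂ (fun w => f (c + w)) (conj (z - c)) :=
    (differentiableAt_comp_add_left c).2 (hf.differentiableAt Metric.isOpen_ball (hmaps hz))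
  exact ((differentiableAt_star_conj_iff.2 hfz).comp z
    (differentiableAt_id.sub_const c)).differentiableWithinAt

theorem circleIntegral_eq_circleIntegral_reflect {E : Type*} [NormedAddCommGroup E]
    [NormedSpace ℂ E] (φ : ℂ → E) (c : ℂ) (R : ℝ) :
    (∮ z in C(c, R), φ z) = ∮ z in C(c, R), (conj (z - c) / (z - c)) • φ (c + conj (z - c)) := by
  rcases eq_or_ne R 0 with rfl | hR
  · simp
  set p : ℝ → E := fun θ => deriv (circleMap c R) θ • φ (circleMap c R θ)
  have hp : Function.Periodic p (2 * π) := fun θ => by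
    simp only [p, deriv_circleMap, periodic_circleMap c R θ, periodic_circleMap 0 R θ]
  have hneg : ∫ θ in 0..2 * π, p θ = ∫ θ in 0..2 * π, p (-θ) := by
    rw [intervalIntegral.integral_comp_neg p]
    simpa using (hp.intervalIntegral_add_eq (-(2 * π)) 0).symm
  simp only [circleIntegral]
  refine hneg.trans (intervalIntegral.integral_congr fun θ _ => ?_)
  have hw : circleMap c R (-θ) = c + conj (circleMap c R θ - c) := by
    rw [circleMap_sub_center, conj_circleMap_zero, ← circleMap_sub_center, add_sub_cancel]
  simp only [p, hw, smul_smul, deriv_circleMap, circleMap_sub_center, conj_circleMap_zero]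
  congr 1
  have hθ : circleMap 0 R θ ≠ 0 := circleMap_ne_center hR
  field_simp

theorem isUnit_one_sub_smul_sub_of_spectrum_subset_ball {𝔸 : Type*} [Ring 𝔸] [Algebra ℂ 𝔸]
    {a : 𝔸} {c : ℂ} {R : ℝ} (ha : spectrum ℂ a ⊆ Metric.ball c R) {u : ℂ} (hu : ‖u‖ * R ≤ 1) :
    IsUnit (1 - u • (a - c • 1)) := by
  rcases eq_or_ne u 0 with rfl | hu0
  · simp
  have hnotMem : u⁻¹ + c ∉ spectrum ℂ a := fun hmem => by
    have hlt := ha hmem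
    rw [Metric.mem_ball, dist_eq_norm, add_sub_cancel_right, norm_inv] at hlt
    exact ((inv_lt_iff_one_lt_mul₀' (norm_pos_iff.2 hu0)).1 hlt).not_ge hu
  have hfactor : 1 - u • (a - c • 1) = u • (algebraMap ℂ 𝔸 (u⁻¹ + c) - a) := by
    simp only [Algebra.algebraMap_eq_smul_one, add_smul, smul_sub, smul_add, smul_smul,
      mul_inv_cancel₀ hu0, one_smul]
    abel
  rw [hfactor, Algebra.smul_def]
  exact (hu0.isUnit.map _).mul (spectrum.notMem_iff.1 hnotMem)

theorem Matrix.conj_div_smul_inv_add_conj_smul_one_sub {ι : Type*} [Fintype ι] [DecidableEq ι]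
    {A : Matrix ι ι ℂ} {c w : ℂ} {R : ℝ} (hw : ‖w‖ = R) (hR : R ≠ 0)
    (hA : IsUnit (1 - (w / (R : ℂ) ^ 2) • (A - c • 1))) :
    (conj w / w) • ((c + conj w) • 1 - A)⁻¹ = w⁻¹ • (1 - (w / (R : ℂ) ^ 2) • (A - c • 1))⁻¹ := by
  have hw0 : w ≠ 0 := norm_ne_zero_iff.1 (hw ▸ hR)
  have hconj0 : conj w ≠ 0 := (map_ne_zero _).2 hw0
  have hmul : conj w * (w / (R : ℂ) ^ 2) = 1 := by
    rw [mul_div_assoc', mul_comm, mul_conj', hw, div_self (by simpa using hR)]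
  have hfactor : (c + conj w) • 1 - A = conj w • (1 - (w / (R : ℂ) ^ 2) • (A - c • 1)) := by
    rw [smul_sub, smul_smul, hmul, one_smul, add_smul]
    abel
  have hinv : (conj w • (1 - (w / (R : ℂ) ^ 2) • (A - c • 1)))⁻¹
      = (conj w)⁻¹ • (1 - (w / (R : ℂ) ^ 2) • (A - c • 1))⁻¹ :=
    Matrix.inv_eq_left_inv <| by
      rw [smul_mul_smul_comm, inv_mul_cancel₀ hconj0, one_smul,
        Matrix.nonsing_inv_mul _ ((isUnit_iff_isUnit_det _).1 hA)]
  rw [hfactor, hinv, smul_smul]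
  congr 1
  field_simp

theorem cauchy_transform_matrix_eq_conj_center_smul_one_general
    {n : ℕ} (c : ℂ) (R : ℝ) (hR : 0 < R)
    (A : Matrix (Fin n) (Fin n) ℂ)
    (hspec : spectrum ℂ A ⊆ Metric.ball c R)
    (f : ℂ → ℂ)
    (hf : DifferentiableOn ℂ f (Metric.ball c R))
    (hfc : ContinuousOn f (Metric.closedBall c R)) :
    (2 * (π : ℂ) * I)⁻¹ •
      (∮ σ in C(c, R), (starRingEnd ℂ) (f σ) •
        (σ • (1 : Matrix (Fin n) (Fin n) ℂ) - A)⁻¹) =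
    (starRingEnd ℂ) (f c) • (1 : Matrix (Fin n) (Fin n) ℂ) := by
  have hunit : ∀ z ∈ Metric.closedBall c R,
      IsUnit (1 - ((z - c) / (R : ℂ) ^ 2) • (A - c • 1)) := fun z hz => by
    refine isUnit_one_sub_smul_sub_of_spectrum_subset_ball hspec ?_
    rw [norm_div, norm_pow, norm_real, Real.norm_of_nonneg hR.le, div_mul_eq_mul_div,
      div_le_one (by positivity), sq]
    exact mul_le_mul_of_nonneg_right (mem_closedBall_iff_norm.1 hz) hR.le
  have hresolvent : DiffContOnCl ℂ (fun z => (1 - ((z - c) / (R : ℂ) ^ 2) • (A - c • 1))⁻¹)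
      (Metric.ball c R) := by
    refine DifferentiableOn.diffContOnCl_ball (fun z hz => ?_) subset_rfl
    have hM : DifferentiableAt ℂ (fun z => 1 - ((z - c) / (R : ℂ) ^ 2) • (A - c • 1)) z := by
      fun_prop
    exact (hM.matrix_inv ((isUnit_iff_isUnit_det _).1 (hunit z hz)).ne_zero).differentiableWithinAt
  set F : ℂ → Matrix (Fin n) (Fin n) ℂ := fun z =>
    conj (f (c + conj (z - c))) • (1 - ((z - c) / (R : ℂ) ^ 2) • (A - c • 1))⁻¹
  have hF : DiffContOnCl ℂ F (Metric.ball c R) :=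
    (DiffContOnCl.mk_ball hf hfc).conj_comp_reflect.smul hresolvent
  have hreflect : (∮ σ in C(c, R), conj (f σ) • (σ • (1 : Matrix (Fin n) (Fin n) ℂ) - A)⁻¹)
      = ∮ z in C(c, R), (z - c)⁻¹ • F z := by
    rw [circleIntegral_eq_circleIntegral_reflect]
    refine circleIntegral.integral_congr hR.le fun z hz => ?_
    have hzc : ‖z - c‖ = R := by simpa [dist_eq_norm] using hz
    simp only [F]
    rw [smul_comm _ (conj (f _)), smul_comm _ (conj (f _)),
      Matrix.conj_div_smul_inv_add_conj_smul_one_sub hzc hR.ne'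
        (hunit z (Metric.sphere_subset_closedBall hz))]
  rw [hreflect, hF.two_pi_i_inv_smul_circleIntegral_sub_inv_smul (Metric.mem_ball_self hR)]
  simp [F]

theorem cauchy_transform_matrix_eq_conj_center_smul_one
    {n : ℕ} (hn : 1 ≤ n) (c : ℂ) (R : ℝ) (hR : 0 < R)
    (A : Matrix (Fin n) (Fin n) ℂ)
    (hspec : spectrum ℂ A ⊆ Metric.ball c R)
    (f : ℂ → ℂ)
    (hf : DifferentiableOn ℂ f (Metric.ball c R))
    (hfc : ContinuousOn f (Metric.closedBall c R)) :
    (2 * (π : ℂ) * I)⁻¹ •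
      (∮ σ in C(c, R), (starRingEnd ℂ) (f σ) •
        (σ • (1 : Matrix (Fin n) (Fin n) ℂ) - A)⁻¹) =
    (starRingEnd ℂ) (f c) • (1 : Matrix (Fin n) (Fin n) ℂ) :=
  cauchy_transform_matrix_eq_conj_center_smul_one_general c R hR A hspec f hf hfc
end

section
/- Let A be the 3×3 complex Jordan block with eigenvalue 0 (the matrix with A₁₂ = A₂₃ = 1 and all other entries 0), let 0 < r ≤ 1, and let s ∈ ℝ. Set σ := r·exp(i s / r) and μ := (exp(i s / r)/(2π))•(σ•1 − A)⁻¹ + ((exp(i s / r)/(2π))•(σ•1 − A)⁻¹)ᴴ. Then μ is Hermitian, for every x ∈ EuclideanSpace ℂ (Fin 3) one has Re⟪μ x, x⟫ ≥ ((2r² − 1)/(2π r³))·‖x‖², and there exists a nonzero x with Re⟪μ x, x⟫ = ((2r² − 1)/(2π r³))·‖x‖²; that is, the smallest eigenvalue of μ equals (2r² − 1)/(2π r³) (independent of s). -/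
/-!
Put `ω = exp (i s / r)`, so that `σ = r ω` with `‖ω‖ = 1` and `ω⁻¹ = conj ω`. Since `A` is nilpotent,
`(σ - A)⁻¹ = σ⁻¹ + σ⁻² A + σ⁻³ A²`, and expanding `μ` entrywise gives
`2 π r³ μ = (2 r² - 1) + v vᴴ + (1 - r²) e eᴴ` with `v = (conj ω, r, ω)` and `e = (0, 1, 0)`.
For `r ≤ 1` the last two terms are positive semidefinite, and both annihilate `(1, 0, -ω²)`.
-/

open Matrix Complex
open scoped Real ComplexOrder

section RayleighQuotient

variable {𝕜 n : Type*} [RCLike 𝕜] [Fintype n] [DecidableEq n]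

theorem Matrix.re_inner_toEuclideanCLM_self_eq (M : Matrix n n 𝕜) (c : ℝ)
    (x : EuclideanSpace 𝕜 n) :
    RCLike.re (inner 𝕜 (toEuclideanCLM (𝕜 := 𝕜) M x) x) =
      c * ‖x‖ ^ 2 + RCLike.re (inner 𝕜 (toEuclideanCLM (𝕜 := 𝕜) (M - c • 1) x) x) := by
  rw [← algebraMap_smul 𝕜 c (1 : Matrix n n 𝕜), RCLike.algebraMap_eq_ofReal, map_sub, map_smul,
    map_one, _root_.sub_apply, inner_sub_left, _root_.smul_apply, inner_smul_left,
    one_apply_eq_self, inner_self_eq_norm_sq_to_K, RCLike.conj_ofReal, map_sub,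
    ← RCLike.ofReal_pow, ← RCLike.ofReal_mul, RCLike.ofReal_re]
  ring

theorem Matrix.le_re_inner_toEuclideanCLM_self {M : Matrix n n 𝕜} {c : ℝ}
    (h : (M - c • 1).PosSemidef) (x : EuclideanSpace 𝕜 n) :
    c * ‖x‖ ^ 2 ≤ RCLike.re (inner 𝕜 (toEuclideanCLM (𝕜 := 𝕜) M x) x) := by
  rw [M.re_inner_toEuclideanCLM_self_eq c]
  exact le_add_of_nonneg_right ((isPositive_toEuclideanLin_iff.mpr h).re_inner_nonneg_left x)

theorem Matrix.re_inner_toEuclideanCLM_self_of_mulVec_eq_zero {M : Matrix n n 𝕜} {c : ℝ}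
    {x : EuclideanSpace 𝕜 n} (h : (M - c • 1) *ᵥ x.ofLp = 0) :
    RCLike.re (inner 𝕜 (toEuclideanCLM (𝕜 := 𝕜) M x) x) = c * ‖x‖ ^ 2 := by
  rw [M.re_inner_toEuclideanCLM_self_eq c, ← WithLp.toLp_ofLp (p := 2) x, toEuclideanCLM_toLp, h]
  simp

end RayleighQuotient

theorem inv_smul_one_sub_jordanBlock {K : Type*} [Field K] {σ : K} (hσ : σ ≠ 0) :
    (σ • (1 : Matrix (Fin 3) (Fin 3) K) - !![0, 1, 0; 0, 0, 1; 0, 0, 0])⁻¹ =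
      !![σ⁻¹, σ⁻¹ ^ 2, σ⁻¹ ^ 3; 0, σ⁻¹, σ⁻¹ ^ 2; 0, 0, σ⁻¹] := by
  apply inv_eq_right_inv
  ext i j
  fin_cases i <;> fin_cases j <;>
    simp only [mul_apply, Fin.sum_univ_three, Matrix.sub_apply, Matrix.smul_apply, one_apply,
      of_apply, cons_val', cons_val_zero, cons_val_one, cons_val, cons_val_fin_one, Fin.zero_eta,
      Fin.mk_one, Fin.reduceFinMk, Fin.isValue, Fin.reduceEq, ↓reduceIte, smul_eq_mul, inv_pow,
      mul_ite, mul_one, mul_zero, one_mul, zero_mul, neg_mul, sub_self, sub_zero, zero_sub, add_zero,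
      zero_add] <;>
    field_simp <;> ring

theorem jordanBlock_mu_sub_smul_one_eq {r : ℝ} (hr : r ≠ 0) {ω : ℂ} (hω : ‖ω‖ = 1) :
    (ω / (2 * π)) • (((r : ℂ) * ω) • (1 : Matrix (Fin 3) (Fin 3) ℂ) - !![0, 1, 0; 0, 0, 1; 0, 0, 0])⁻¹
      + ((ω / (2 * π)) • (((r : ℂ) * ω) • (1 : Matrix (Fin 3) (Fin 3) ℂ)
          - !![0, 1, 0; 0, 0, 1; 0, 0, 0])⁻¹)ᴴ
      - ((2 * r ^ 2 - 1) / (2 * π * r ^ 3) : ℝ) • 1 =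
    (2 * π * r ^ 3)⁻¹ • (vecMulVec ![star ω, (r : ℂ), ω] (star ![star ω, (r : ℂ), ω])
      + (1 - r ^ 2) • vecMulVec ![0, 1, 0] (star ![0, 1, 0])) := by
  have hω0 : ω ≠ 0 := norm_ne_zero_iff.mp (hω ▸ one_ne_zero)
  have hconj : star ω = ω⁻¹ := (RCLike.inv_eq_conj hω).symm
  rw [inv_smul_one_sub_jordanBlock (mul_ne_zero (ofReal_ne_zero.mpr hr) hω0)]
  ext i j
  fin_cases i <;> fin_cases j <;>
    simp only [Matrix.add_apply, Matrix.sub_apply, Matrix.smul_apply, conjTranspose_apply,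
      vecMulVec_apply, Pi.star_apply, one_apply, of_apply, cons_val', cons_val_zero, cons_val_one,
      cons_val, cons_val_fin_one, smul_eq_mul, real_smul, star_mul', star_div₀, star_inv₀, star_pow,
      star_ofNat, star_zero, star_one, hconj, RCLike.star_def, conj_ofReal, inv_inv, ofReal_div,
      ofReal_sub, ofReal_mul, ofReal_ofNat, ofReal_pow, ofReal_one, ofReal_inv, Fin.zero_eta,
      Fin.mk_one, Fin.reduceFinMk, Fin.isValue, Fin.reduceEq, ↓reduceIte, mul_zero, mul_one,
      zero_add, add_zero, sub_zero] <;>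
    field_simp <;> ring

theorem jordanBlock_gram_mulVec_eq_zero {ω : ℂ} (hω : ‖ω‖ = 1) (r c : ℝ) :
    (vecMulVec ![star ω, (r : ℂ), ω] (star ![star ω, (r : ℂ), ω])
      + c • vecMulVec ![0, 1, 0] (star ![0, 1, 0])) *ᵥ ![1, 0, -ω ^ 2] = 0 := by
  have hv : star ![star ω, (r : ℂ), ω] ⬝ᵥ ![1, 0, -ω ^ 2] = 0 := by
    have hstar : (starRingEnd ℂ) ω * ω = 1 := by simp [Complex.conj_mul', hω]
    simp only [dotProduct, Fin.sum_univ_three, Pi.star_apply, cons_val_zero, cons_val_one,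
      cons_val_two, head_cons, tail_cons, RCLike.star_def, conj_conj, conj_ofReal]
    linear_combination (-ω) * hstar
  have he : star ![0, 1, 0] ⬝ᵥ ![1, 0, -ω ^ 2] = 0 := by simp [dotProduct, Fin.sum_univ_three]
  rw [add_mulVec, smul_mulVec, vecMulVec_mulVec, vecMulVec_mulVec, hv, he]
  simp

theorem jordan_block_mu_smallest_eigenvalue
    (r : ℝ) (hr0 : 0 < r) (hr1 : r ≤ 1) (s : ℝ)
    (A : Matrix (Fin 3) (Fin 3) ℂ)
    (hA : A = !![0, 1, 0; 0, 0, 1; 0, 0, 0])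
    (σ : ℂ) (hσ : σ = (r : ℂ) * Complex.exp (I * s / r))
    (μ : Matrix (Fin 3) (Fin 3) ℂ)
    (hμ : μ = (Complex.exp (I * s / r) / (2 * (π : ℂ))) •
          (σ • (1 : Matrix (Fin 3) (Fin 3) ℂ) - A)⁻¹
        + ((Complex.exp (I * s / r) / (2 * (π : ℂ))) •
          (σ • (1 : Matrix (Fin 3) (Fin 3) ℂ) - A)⁻¹)ᴴ) :
    μ.IsHermitian ∧
    (∀ x : EuclideanSpace ℂ (Fin 3),
      (2 * r ^ 2 - 1) / (2 * π * r ^ 3) * ‖x‖ ^ 2 ≤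
        (inner ℂ ((Matrix.toEuclideanCLM (𝕜 := ℂ) μ) x) x : ℂ).re) ∧
    ∃ x : EuclideanSpace ℂ (Fin 3), x ≠ 0 ∧
      (inner ℂ ((Matrix.toEuclideanCLM (𝕜 := ℂ) μ) x) x : ℂ).re =
        (2 * r ^ 2 - 1) / (2 * π * r ^ 3) * ‖x‖ ^ 2 := by
  subst hA hσ hμ
  set ω := Complex.exp (I * s / r)
  have hω : ‖ω‖ = 1 := by simp [ω, Complex.norm_exp]
  have hdecomp := jordanBlock_mu_sub_smul_one_eq hr0.ne' hω
  refine ⟨isHermitian_add_transpose_self _, fun x => le_re_inner_toEuclideanCLM_self ?_ x,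
    WithLp.toLp 2 ![1, 0, -ω ^ 2], by simp, ?_⟩
  · have h1r : (0 : ℝ) ≤ 1 - r ^ 2 := by nlinarith
    rw [hdecomp]
    exact ((posSemidef_vecMulVec_self_star _).add
      ((posSemidef_vecMulVec_self_star _).smul h1r)).smul (by positivity)
  · rw [← RCLike.re_to_complex]
    refine re_inner_toEuclideanCLM_self_of_mulVec_eq_zero ?_
    rw [hdecomp, WithLp.ofLp_toLp, smul_mulVec, jordanBlock_gram_mulVec_eq_zero hω, smul_zero]
end

section
/- Let n ≥ 1 and let M be an invertible n×n complex matrix with ‖M‖ > 0, where ‖·‖ is the ℓ² operator norm. Suppose there exists a unit vector v ∈ EuclideanSpace ℂ (Fin n) with ‖M v‖ = ‖M‖ and ⟪M v, v⟫ = 0. Let c₀, c₁ ∈ ℂ with Re(c₁) ≥ |c₁|²/(2‖M‖²). Then ‖M‖ ≤ ‖M + c₀•1 + c₁•(Mᴴ)⁻¹‖. -/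
/-!
Pair `L v`, where `L = M + c₀ • 1 + c₁ • (Mᴴ)⁻¹`, with `M v`. The `c₀` term drops out because
`⟪v, M v⟫ = 0`, and `⟪(Mᴴ)⁻¹ v, M v⟫ = ⟪v, v⟫`, so `⟪L v, M v⟫ = ‖M v‖² + c̄₁ ‖v‖²`. Its real
part is at least `‖M v‖²` as soon as `0 ≤ Re c₁`, and Cauchy–Schwarz gives `‖M v‖ ≤ ‖L‖ ‖v‖`.
-/

open Matrix Complex

open ContinuousLinearMap ComplexConjugate

section InnerProductSpace

variable {𝕜 E : Type*} [RCLike 𝕜] [NormedAddCommGroup E] [InnerProductSpace 𝕜 E] [CompleteSpace E]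
  {T W : E →L[𝕜] E} {v : E}

lemma inner_apply_apply_of_star_mul_eq_one (hW : star T * W = 1) (v : E) :
    inner 𝕜 (W v) (T v) = (‖v‖ ^ 2 : 𝕜) := by
  rw [← adjoint_inner_left, ← star_eq_adjoint, ← mul_apply_eq_comp, hW, one_apply_eq_self,
    inner_self_eq_norm_sq_to_K]

lemma inner_add_smul_one_add_smul_apply (hW : star T * W = 1) (hv : inner 𝕜 (T v) v = 0)
    (c₀ c₁ : 𝕜) :
    inner 𝕜 ((T + c₀ • 1 + c₁ • W) v) (T v) = (‖T v‖ ^ 2 : 𝕜) + conj c₁ * (‖v‖ ^ 2 : 𝕜) := by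
  have hv' : inner 𝕜 v (T v) = 0 := by rw [← inner_conj_symm, hv, map_zero]
  simp only [_root_.add_apply, _root_.smul_apply, one_apply_eq_self, inner_add_left,
    inner_smul_left, hv', inner_apply_apply_of_star_mul_eq_one hW, inner_self_eq_norm_sq_to_K]
  ring

lemma norm_apply_le_norm_add_smul_one_add_smul_mul_norm (hW : star T * W = 1)
    (hv : inner 𝕜 (T v) v = 0) (c₀ : 𝕜) {c₁ : 𝕜} (hc₁ : 0 ≤ RCLike.re c₁) :
    ‖T v‖ ≤ ‖T + c₀ • 1 + c₁ • W‖ * ‖v‖ := by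
  set L := T + c₀ • 1 + c₁ • W
  have hre : RCLike.re (inner 𝕜 (L v) (T v)) = ‖T v‖ ^ 2 + RCLike.re c₁ * ‖v‖ ^ 2 := by
    rw [inner_add_smul_one_add_smul_apply hW hv]
    simp
  have hsq : ‖T v‖ * ‖T v‖ ≤ ‖L‖ * ‖v‖ * ‖T v‖ :=
    calc ‖T v‖ * ‖T v‖ ≤ RCLike.re (inner 𝕜 (L v) (T v)) := by
          rw [hre, ← sq]; exact le_add_of_nonneg_right (mul_nonneg hc₁ (sq_nonneg _))
      _ ≤ ‖inner 𝕜 (L v) (T v)‖ := RCLike.re_le_norm _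
      _ ≤ ‖L v‖ * ‖T v‖ := norm_inner_le_norm _ _
      _ ≤ ‖L‖ * ‖v‖ * ‖T v‖ := by gcongr; exact L.le_opNorm v
  rcases (norm_nonneg (T v)).eq_or_lt with h | h
  · rw [← h]; positivity
  · exact le_of_mul_le_mul_right hsq h

end InnerProductSpace

lemma star_toEuclideanCLM_mul_toEuclideanCLM_inv_conjTranspose {n : Type*} [Fintype n]
    [DecidableEq n] {M : Matrix n n ℂ} (hM : IsUnit M) :
    star (toEuclideanCLM (𝕜 := ℂ) M) * toEuclideanCLM (𝕜 := ℂ) (Mᴴ)⁻¹ = 1 := by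
  rw [← map_star, ← map_mul, star_eq_conjTranspose,
    mul_nonsing_inv _ ((isUnit_iff_isUnit_det Mᴴ).mp hM.star), map_one]

theorem norm_le_norm_add_scalar_add_inv_adjoint_general
    {n : ℕ} (M : Matrix (Fin n) (Fin n) ℂ)
    (hMunit : IsUnit M)
    (v : EuclideanSpace ℂ (Fin n)) (hv : ‖v‖ = 1)
    (hMv : ‖(Matrix.toEuclideanCLM (𝕜 := ℂ) M) v‖ = l2opNorm M)
    (horth : (inner ℂ ((Matrix.toEuclideanCLM (𝕜 := ℂ) M) v) v : ℂ) = 0)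
    (c₀ c₁ : ℂ)
    (hc₁ : ‖c₁‖ ^ 2 / (2 * l2opNorm M ^ 2) ≤ c₁.re) :
    l2opNorm M ≤ l2opNorm (M + c₀ • (1 : Matrix (Fin n) (Fin n) ℂ) + c₁ • (Mᴴ)⁻¹) := by
  have hc₁ : 0 ≤ RCLike.re c₁ := le_trans (by positivity) hc₁
  have h := norm_apply_le_norm_add_smul_one_add_smul_mul_norm
    (star_toEuclideanCLM_mul_toEuclideanCLM_inv_conjTranspose hMunit) horth c₀ hc₁
  simpa [l2opNorm, hMv, hv] using h

theorem norm_le_norm_add_scalar_add_inv_adjoint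
    {n : ℕ} (hn : 1 ≤ n) (M : Matrix (Fin n) (Fin n) ℂ)
    (hMunit : IsUnit M) (hMpos : 0 < l2opNorm M)
    (v : EuclideanSpace ℂ (Fin n)) (hv : ‖v‖ = 1)
    (hMv : ‖(Matrix.toEuclideanCLM (𝕜 := ℂ) M) v‖ = l2opNorm M)
    (horth : (inner ℂ ((Matrix.toEuclideanCLM (𝕜 := ℂ) M) v) v : ℂ) = 0)
    (c₀ c₁ : ℂ)
    (hc₁ : ‖c₁‖ ^ 2 / (2 * l2opNorm M ^ 2) ≤ c₁.re) :
    l2opNorm M ≤ l2opNorm (M + c₀ • (1 : Matrix (Fin n) (Fin n) ℂ) + c₁ • (Mᴴ)⁻¹) :=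
  norm_le_norm_add_scalar_add_inv_adjoint_general M hMunit v hv hMv horth c₀ c₁ hc₁
end
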